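/- arXiv:0708.3480 — 9 statements merged into one kernel-verified Lean document; each statement's English description precedes it below -/
import Mathlib

section
/- Let E > 0, G > 0 be real numbers and c₁₁, c₁₂, c₂₂ vectors in ℝ². Set W = √(EG), Δ₁ = det(c₁₁, c₁₂), Δ₂ = det(c₁₁, c₂₂), Δ₃ = det(c₁₂, c₂₂), L = 2Δ₁/W, M = Δ₂/W, N = 2Δ₃/W, k = (LN − M²)/(EG), κ = (EN + GL)/(2EG). If G·c₁₁ + E·c₂₂ = 0, then κ² − k = 0. -/
/-- The determinant of the 2×2 matrix with columns `x` and `y`. -/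
noncomputable def det2 (x y : Fin 2 → ℝ) : ℝ := x 0 * y 1 - x 1 * y 0

/-- At a point of a surface in `𝔼⁴` with orthogonal parameters (`F = 0`), if the surface
is minimal at the point, i.e. `G·c₁₁ + E·c₂₂ = 0`, then the invariants of the Weingarten
map satisfy `κ² - k = 0`. -/
theorem minimal_implies_discriminant_zero
    (E G : ℝ) (hE : 0 < E) (hG : 0 < G)
    (c₁₁ c₁₂ c₂₂ : Fin 2 → ℝ)
    (W Δ₁ Δ₂ Δ₃ L M N k κ : ℝ)
    (hW : W = Real.sqrt (E * G))
    (hΔ₁ : Δ₁ = det2 c₁₁ c₁₂) (hΔ₂ : Δ₂ = det2 c₁₁ c₂₂) (hΔ₃ : Δ₃ = det2 c₁₂ c₂₂)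
    (hL : L = 2 * Δ₁ / W) (hM : M = Δ₂ / W) (hN : N = 2 * Δ₃ / W)
    (hk : k = (L * N - M ^ 2) / (E * G))
    (hκ : κ = (E * N + G * L) / (2 * (E * G)))
    (hmin : G • c₁₁ + E • c₂₂ = 0) :
    κ ^ 2 - k = 0 := by
  have h0 := congrFun hmin 0
  have h1 := congrFun hmin 1
  simp [Pi.add_apply, Pi.smul_apply, smul_eq_mul] at h0 h1
  have hEG : 0 < E * G := mul_pos hE hG
  have hW2 : W ^ 2 = E * G := by
    rw [hW, sq, Real.mul_self_sqrt hEG.le]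
  have hWpos : 0 < W := by
    rw [hW]; exact Real.sqrt_pos.mpr hEG
  -- c₂₂ in terms of c₁₁
  have e0 : c₂₂ 0 = -(G / E) * c₁₁ 0 := by field_simp; linarith
  have e1 : c₂₂ 1 = -(G / E) * c₁₁ 1 := by field_simp; linarith
  have hM0 : M = 0 := by
    rw [hM, hΔ₂, det2, e0, e1]; ring_nf
  have hN' : N = (G / E) * L := by
    rw [hN, hL, hΔ₃, hΔ₁, det2, det2, e0, e1]
    field_simp
    ring
  rw [hk, hκ, hM0, hN']
  field_simp
  ring
end

section
/- Let E > 0, G > 0 be real numbers and c₁₁, c₁₂, c₂₂ vectors in ℝ². Set W = √(EG), Δ₁ = det(c₁₁, c₁₂), Δ₂ = det(c₁₁, c₂₂), Δ₃ = det(c₁₂, c₂₂), L = 2Δ₁/W, M = Δ₂/W, N = 2Δ₃/W, k = (LN − M²)/(EG), κ = (EN + GL)/(2EG). Assume the point is not flat, i.e., (L, M, N) ≠ (0, 0, 0). Then G·c₁₁ + E·c₂₂ = 0 if and only if κ² − k = 0. -/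
set_option maxHeartbeats 1000000 in
/-- At a non-flat point of a surface in `𝔼⁴` with orthogonal parameters (`F = 0`),
the surface is minimal at the point (`G·c₁₁ + E·c₂₂ = 0`) if and only if the invariants
of the Weingarten map satisfy `κ² - k = 0`. -/
theorem minimal_iff_discriminant_zero
    (E G : ℝ) (hE : 0 < E) (hG : 0 < G)
    (c₁₁ c₁₂ c₂₂ : Fin 2 → ℝ)
    (W Δ₁ Δ₂ Δ₃ L M N k κ : ℝ)
    (hW : W = Real.sqrt (E * G))
    (hΔ₁ : Δ₁ = det2 c₁₁ c₁₂) (hΔ₂ : Δ₂ = det2 c₁₁ c₂₂) (hΔ₃ : Δ₃ = det2 c₁₂ c₂₂)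
    (hL : L = 2 * Δ₁ / W) (hM : M = Δ₂ / W) (hN : N = 2 * Δ₃ / W)
    (hk : k = (L * N - M ^ 2) / (E * G))
    (hκ : κ = (E * N + G * L) / (2 * (E * G)))
    (hnotflat : ¬(L = 0 ∧ M = 0 ∧ N = 0)) :
    G • c₁₁ + E • c₂₂ = 0 ↔ κ ^ 2 - k = 0 := by
  have hEG : 0 < E * G := mul_pos hE hG
  have hWpos : 0 < W := by rw [hW]; exact Real.sqrt_pos.mpr hEG
  have hWne : W ≠ 0 := hWpos.ne'
  have hW2 : W ^ 2 = E * G := by rw [hW, sq, Real.mul_self_sqrt hEG.le]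
  have hLN : L * N = 4 * (Δ₁ * Δ₃) / (E * G) := by
    rw [hL, hN, div_mul_div_comm, ← sq, hW2]; ring_nf
  have hM2 : M ^ 2 = Δ₂ ^ 2 / (E * G) := by rw [hM, div_pow, hW2]
  have hκ2 : κ ^ 2 = (E * Δ₃ + G * Δ₁) ^ 2 / (E * G) ^ 3 := by
    rw [hκ, hL, hN]
    rw [div_pow]
    rw [show E * (2 * Δ₃ / W) + G * (2 * Δ₁ / W) = 2 * (E * Δ₃ + G * Δ₁) / W by
      field_simp]
    rw [div_pow, mul_pow, mul_pow, hW2]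
    field_simp
  have hkey : κ ^ 2 - k = ((E * Δ₃ - G * Δ₁) ^ 2 + E * G * Δ₂ ^ 2) / (E * G) ^ 3 := by
    rw [hk, hLN, hM2, hκ2]
    field_simp
    ring
  have hden : (0:ℝ) < (E * G) ^ 3 := by positivity
  have hiff : κ ^ 2 - k = 0 ↔ (E * Δ₃ - G * Δ₁ = 0 ∧ Δ₂ = 0) := by
    rw [hkey, div_eq_zero_iff]
    constructor
    · rintro (h | h)
      · have hs1 : (E * Δ₃ - G * Δ₁) ^ 2 = 0 := by
          nlinarith [sq_nonneg Δ₂, sq_nonneg (E * Δ₃ - G * Δ₁)]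
        have hs2 : Δ₂ ^ 2 = 0 := by
          nlinarith [sq_nonneg Δ₂, sq_nonneg (E * Δ₃ - G * Δ₁)]
        exact ⟨pow_eq_zero_iff two_ne_zero |>.mp hs1,
          pow_eq_zero_iff two_ne_zero |>.mp hs2⟩
      · exact absurd h hden.ne'
    · rintro ⟨h1, h2⟩
      left; rw [h1, h2]; ring
  rw [hiff]
  simp only [det2] at hΔ₁ hΔ₂ hΔ₃
  constructor
  · intro hmin
    have h0 : G * c₁₁ 0 + E * c₂₂ 0 = 0 := congrFun hmin 0
    have h1 : G * c₁₁ 1 + E * c₂₂ 1 = 0 := congrFun hmin 1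
    constructor
    · rw [hΔ₃, hΔ₁]; linear_combination c₁₂ 0 * h1 - c₁₂ 1 * h0
    · rw [hΔ₂]
      have hz : E * (c₁₁ 0 * c₂₂ 1 - c₁₁ 1 * c₂₂ 0) = 0 := by
        linear_combination c₁₁ 0 * h1 - c₁₁ 1 * h0
      exact (mul_eq_zero.mp hz).resolve_left hE.ne'
  · rintro ⟨h1, h2⟩
    have hΔne : Δ₁ ≠ 0 ∨ Δ₂ ≠ 0 ∨ Δ₃ ≠ 0 := by
      by_contra hc
      push_neg at hc
      obtain ⟨a1, a2, a3⟩ := hc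
      exact hnotflat ⟨by rw [hL, a1]; simp, by rw [hM, a2]; simp, by rw [hN, a3]; simp⟩
    have hd : Δ₁ ≠ 0 := by
      rcases hΔne with h | h | h
      · exact h
      · exact absurd h2 h
      · intro h1'
        apply h
        have hE3 : E * Δ₃ = 0 := by rw [h1'] at h1; linarith
        exact (mul_eq_zero.mp hE3).resolve_left hE.ne'
    rw [hΔ₂] at h2
    rw [hΔ₁] at h1 hd
    rw [hΔ₃] at h1
    have e1 : c₁₁ 0 * (G * c₁₁ 1 + E * c₂₂ 1) - c₁₁ 1 * (G * c₁₁ 0 + E * c₂₂ 0) = 0 := by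
      linear_combination E * h2
    have e2 : c₁₂ 0 * (G * c₁₁ 1 + E * c₂₂ 1) - c₁₂ 1 * (G * c₁₁ 0 + E * c₂₂ 0) = 0 := by
      linear_combination h1
    have hv0 : G * c₁₁ 0 + E * c₂₂ 0 = 0 := by
      have hz : (c₁₁ 0 * c₁₂ 1 - c₁₁ 1 * c₁₂ 0) * (G * c₁₁ 0 + E * c₂₂ 0) = 0 := by
        linear_combination c₁₂ 0 * e1 - c₁₁ 0 * e2
      exact (mul_eq_zero.mp hz).resolve_left hd
    have hv1 : G * c₁₁ 1 + E * c₂₂ 1 = 0 := by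
      have hz : (c₁₁ 0 * c₁₂ 1 - c₁₁ 1 * c₁₂ 0) * (G * c₁₁ 1 + E * c₂₂ 1) = 0 := by
        linear_combination c₁₂ 1 * e1 - c₁₁ 1 * e2
      exact (mul_eq_zero.mp hz).resolve_left hd
    funext i
    fin_cases i
    · simpa using hv0
    · simpa using hv1
end

section
/- Let J ⊆ ℝ be an open interval, let e, x : J → E⁴ be smooth with ⟨e(v), e(v)⟩ = 1 for all v, and suppose there are smooth functions p, q : J → ℝ with x'(v) = p(v)·e(v) + q(v)·e'(v) for all v (developability). Define the ruled surface z(u,v) = x(v) + u·e(v). Then at every point (u,v) with e'(v) ≠ 0 and u + q(v) ≠ 0: (i) z_uu = 0; (ii) z_uv lies in the tangent plane span{z_u, z_v}; consequently the orthogonal projections of z_uu and z_uv onto the orthogonal complement of span{z_u, z_v} vanish, so the coefficients L, M, N vanish (hence k = κ = 0) and the Gauss curvature K = (⟨h₁₁, h₂₂⟩ − ‖h₁₂‖²)/(EG − F²) vanishes, where hᵢⱼ denotes the orthogonal projection of the corresponding second partial derivative of z onto the orthogonal complement of span{z_u, z_v}. -/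
open scoped RealInnerProductSpace

/-- A developable ruled surface `z(u,v) = x(v) + u·e(v)` in `𝔼⁴` (where `x' = p·e + q·e'`)
satisfies, at every regular point: `z_uu = 0`, `z_uv` is tangent, the normal components of
`z_uu` and `z_uv` vanish, the Gauss curvature `K` vanishes, and for every orthonormal
normal pair `e₁, e₂` the coefficients `L, M, N` vanish, hence `k = ϰ = 0`. -/
theorem developable_ruled_surface_flat
    (J : Set ℝ) (hJopen : IsOpen J) (hJconn : J.OrdConnected)
    (e x : ℝ → EuclideanSpace ℝ (Fin 4)) (p q : ℝ → ℝ)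
    (he : ContDiffOn ℝ (⊤ : ℕ∞) e J) (hx : ContDiffOn ℝ (⊤ : ℕ∞) x J)
    (hp : ContDiffOn ℝ (⊤ : ℕ∞) p J) (hq : ContDiffOn ℝ (⊤ : ℕ∞) q J)
    (hunit : ∀ v ∈ J, ⟪e v, e v⟫ = 1)
    (hdev : ∀ v ∈ J, deriv x v = p v • e v + q v • deriv e v)
    (z : ℝ → ℝ → EuclideanSpace ℝ (Fin 4))
    (hz : ∀ u v, z u v = x v + u • e v)
    (u v : ℝ) (hv : v ∈ J) (hreg₁ : deriv e v ≠ 0) (hreg₂ : u + q v ≠ 0)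
    (zu zv zuu zuv zvv : EuclideanSpace ℝ (Fin 4))
    (hzu : zu = deriv (fun t => z t v) u)
    (hzv : zv = deriv (fun s => z u s) v)
    (hzuu : zuu = deriv (fun t => deriv (fun t' => z t' v) t) u)
    (hzuv : zuv = deriv (fun s => deriv (fun t => z t s) u) v)
    (hzvv : zvv = deriv (fun s => deriv (fun s' => z u s') s) v)
    (T : Submodule ℝ (EuclideanSpace ℝ (Fin 4)))
    (hT : T = Submodule.span ℝ {zu, zv})
    (E F G W : ℝ)
    (hE : E = ⟪zu, zu⟫) (hF : F = ⟪zu, zv⟫) (hG : G = ⟪zv, zv⟫)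
    (hW : W = Real.sqrt (E * G - F ^ 2)) :
    zuu = 0 ∧ zuv ∈ T ∧
    (Submodule.orthogonalProjectionOnto Tᗮ zuu : EuclideanSpace ℝ (Fin 4)) = 0 ∧
    (Submodule.orthogonalProjectionOnto Tᗮ zuv : EuclideanSpace ℝ (Fin 4)) = 0 ∧
    (⟪(Submodule.orthogonalProjectionOnto Tᗮ zuu : EuclideanSpace ℝ (Fin 4)),
        (Submodule.orthogonalProjectionOnto Tᗮ zvv : EuclideanSpace ℝ (Fin 4))⟫
      - ‖(Submodule.orthogonalProjectionOnto Tᗮ zuv : EuclideanSpace ℝ (Fin 4))‖ ^ 2)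
      / (E * G - F ^ 2) = 0 ∧
    (∀ e₁ e₂ : EuclideanSpace ℝ (Fin 4),
      ⟪e₁, e₁⟫ = 1 → ⟪e₂, e₂⟫ = 1 → ⟪e₁, e₂⟫ = 0 →
      ⟪zu, e₁⟫ = 0 → ⟪zv, e₁⟫ = 0 → ⟪zu, e₂⟫ = 0 → ⟪zv, e₂⟫ = 0 →
      let c₁₁ : Fin 2 → ℝ := ![⟪zuu, e₁⟫, ⟪zuu, e₂⟫]
      let c₁₂ : Fin 2 → ℝ := ![⟪zuv, e₁⟫, ⟪zuv, e₂⟫]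
      let c₂₂ : Fin 2 → ℝ := ![⟪zvv, e₁⟫, ⟪zvv, e₂⟫]
      let L : ℝ := 2 * det2 c₁₁ c₁₂ / W
      let M : ℝ := det2 c₁₁ c₂₂ / W
      let N : ℝ := 2 * det2 c₁₂ c₂₂ / W
      L = 0 ∧ M = 0 ∧ N = 0 ∧
      (L * N - M ^ 2) / (E * G - F ^ 2) = 0 ∧
      (E * N + G * L - 2 * F * M) / (2 * (E * G - F ^ 2)) = 0) := by
  have hderiv_u : ∀ (t s : ℝ), deriv (fun t' => z t' s) t = e s := by
    intro t s
    have hfun : (fun t' => z t' s) = fun t' => x s + t' • e s := by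
      funext t'; rw [hz]
    rw [hfun]
    have h1 : HasDerivAt (fun t' : ℝ => x s + t' • e s) (e s) t := by
      simpa using ((hasDerivAt_id t).smul_const (e s)).const_add (x s)
    exact h1.deriv
  have hzu' : zu = e v := by rw [hzu, hderiv_u]
  have hzuu' : zuu = 0 := by
    rw [hzuu]
    have hc : (fun t => deriv (fun t' => z t' v) t) = fun _ => e v := by
      funext t; exact hderiv_u t v
    rw [hc, deriv_const]
  have hzuv' : zuv = deriv e v := by
    rw [hzuv]
    have hc : (fun s => deriv (fun t => z t s) u) = e := by
      funext s; exact hderiv_u u s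
    rw [hc]
  have hed : DifferentiableAt ℝ e v :=
    (he.contDiffAt (hJopen.mem_nhds hv)).differentiableAt (by simp)
  have hxd : DifferentiableAt ℝ x v :=
    (hx.contDiffAt (hJopen.mem_nhds hv)).differentiableAt (by simp)
  have hzv' : zv = p v • e v + (u + q v) • deriv e v := by
    rw [hzv]
    have hfun : (fun s => z u s) = fun s => x s + u • e s := by funext s; rw [hz]
    rw [hfun]
    have h1 : HasDerivAt (fun s => x s + u • e s) (deriv x v + u • deriv e v) v :=
      (hxd.hasDerivAt).add ((hed.hasDerivAt).const_smul u)
    rw [h1.deriv, hdev v hv]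
    module
  have key : zuv = (u + q v)⁻¹ • zv - ((u + q v)⁻¹ * p v) • zu := by
    rw [hzv', hzu', hzuv']
    match_scalars <;> field_simp <;> ring
  have hmem : zuv ∈ T := by
    rw [hT, key]
    have h1 : zu ∈ Submodule.span ℝ {zu, zv} :=
      Submodule.subset_span (by simp)
    have h2 : zv ∈ Submodule.span ℝ {zu, zv} :=
      Submodule.subset_span (by simp)
    exact Submodule.sub_mem _ (Submodule.smul_mem _ _ h2) (Submodule.smul_mem _ _ h1)
  have hp1 : (Submodule.orthogonalProjectionOnto Tᗮ zuu : EuclideanSpace ℝ (Fin 4)) = 0 := by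
    rw [hzuu']; simp
  have hp2 : (Submodule.orthogonalProjectionOnto Tᗮ zuv : EuclideanSpace ℝ (Fin 4)) = 0 := by
    have := Submodule.orthogonalProjectionOnto_apply_of_mem_orthogonal
      (K := Tᗮ) (T.le_orthogonal_orthogonal hmem)
    rw [this]; rfl
  refine ⟨hzuu', hmem, hp1, hp2, by rw [hp1, hp2]; simp, ?_⟩
  intro e₁ e₂ _ _ _ hu1 hv1 hu2 hv2
  obtain ⟨a, b, hab⟩ := Submodule.mem_span_pair.mp (hT ▸ hmem)
  have hzuv1 : ⟪zuv, e₁⟫ = 0 := by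
    rw [← hab, inner_add_left, real_inner_smul_left, real_inner_smul_left, hu1, hv1]
    ring
  have hzuv2 : ⟪zuv, e₂⟫ = 0 := by
    rw [← hab, inner_add_left, real_inner_smul_left, real_inner_smul_left, hu2, hv2]
    ring
  have hzuu1 : ⟪zuu, e₁⟫ = 0 := by rw [hzuu']; simp
  have hzuu2 : ⟪zuu, e₂⟫ = 0 := by rw [hzuu']; simp
  simp only [hzuv1, hzuv2, hzuu1, hzuu2, det2, Matrix.cons_val_zero, Matrix.cons_val_one,
    Matrix.head_cons]
  norm_num
end

section
/- Let D ⊆ ℝ² be open, let z, b, l : D → E⁴ be smooth maps such that at each point ⟨z_u, z_v⟩ = 0, E := ⟨z_u, z_u⟩ > 0, G := ⟨z_v, z_v⟩ > 0, and the four vectors z_u/√E, z_v/√G, b, l form an orthonormal frame of E⁴. Assume the second fundamental form is collinear with b, i.e., ⟨z_uu, l⟩ = ⟨z_uv, l⟩ = ⟨z_vv, l⟩ = 0 on D. Define ν₁ = ⟨z_uu, b⟩/E, λ = ⟨z_uv, b⟩/√(EG), ν₂ = ⟨z_vv, b⟩/G, β₁ = ⟨∂b/∂u, l⟩/√E, β₂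 = ⟨∂b/∂v, l⟩/√G. Then at every point of D, (ν₁ν₂ − λ²)·(β₁² + β₂²) = 0; that is, either the Gauss curvature K = ν₁ν₂ − λ² vanishes or the invariant β = β₁² + β₂² vanishes. -/
open scoped RealInnerProductSpace

/-- Partial derivative in the first variable. -/
noncomputable def pu {F : Type*} [NormedAddCommGroup F] [NormedSpace ℝ F]
    (f : ℝ × ℝ → F) (p : ℝ × ℝ) : F := fderiv ℝ f p (1, 0)

/-- Partial derivative in the second variable. -/
noncomputable def pv {F : Type*} [NormedAddCommGroup F] [NormedSpace ℝ F]
    (f : ℝ × ℝ → F) (p : ℝ × ℝ) : F := fderiv ℝ f p (0, 1)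

section auxlemmas
variable {F : Type*} [NormedAddCommGroup F] [NormedSpace ℝ F] {p : ℝ × ℝ}

lemma contDiffAt_fderiv_apply {f : ℝ × ℝ → F} (hf : ContDiffAt ℝ (⊤ : ℕ∞) f p) (w : ℝ × ℝ) :
    ContDiffAt ℝ (⊤ : ℕ∞) (fun q => fderiv ℝ f q w) p :=
  (hf.fderiv_right (by simp)).clm_apply contDiffAt_const

lemma symm_second {f : ℝ × ℝ → F} (hf : ContDiffAt ℝ (⊤ : ℕ∞) f p) (v w : ℝ × ℝ) :
    fderiv ℝ (fun q => fderiv ℝ f q v) p w = fderiv ℝ (fun q => fderiv ℝ f q w) p v := by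
  have hd : DifferentiableAt ℝ (fderiv ℝ f) p :=
    (hf.fderiv_right (m := 1) (by exact WithTop.coe_le_coe.mpr le_top)).differentiableAt one_ne_zero
  have h1 : ∀ u : ℝ × ℝ, fderiv ℝ (fun q => fderiv ℝ f q u) p
      = (fderiv ℝ (fderiv ℝ f) p).flip u := by
    intro u
    rw [fderiv_clm_apply hd (differentiableAt_const u)]
    simp
  have hs := hf.isSymmSndFDerivAt (by simp [minSmoothness_of_isRCLikeNormedField]; exact WithTop.coe_le_coe.mpr le_top)
  rw [h1 v, h1 w]
  exact hs w v

lemma pv_pu_symm {f : ℝ × ℝ → F} (hf : ContDiffAt ℝ (⊤ : ℕ∞) f p) : pv (pu f) p = pu (pv f) p := by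
  exact symm_second hf (1,0) (0,1)

variable {H : Type*} [NormedAddCommGroup H] [InnerProductSpace ℝ H]

lemma inner_const_rule {D : Set (ℝ × ℝ)} (hD : IsOpen D) {f g : ℝ × ℝ → H}
    (hf : DifferentiableAt ℝ f p) (hg : DifferentiableAt ℝ g p)
    {c : ℝ} (h : ∀ q ∈ D, ⟪f q, g q⟫ = c) (hp : p ∈ D) (w : ℝ × ℝ) :
    ⟪f p, fderiv ℝ g p w⟫ + ⟪fderiv ℝ f p w, g p⟫ = 0 := by
  have h0 : fderiv ℝ (fun q => ⟪f q, g q⟫) p = 0 := by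
    have heq : (fun q => ⟪f q, g q⟫) =ᶠ[nhds p] fun _ => c :=
      Filter.eventuallyEq_of_mem (hD.mem_nhds hp) h
    rw [heq.fderiv_eq]
    exact fderiv_const_apply c
  have := fderiv_inner_apply ℝ hf hg w
  rw [h0] at this
  simpa using this.symm

end auxlemmas

set_option maxHeartbeats 2000000 in
/-- For a surface in `𝔼⁴` consisting of flat points, with orthonormal frame field
`{z_u/√E, z_v/√G, b, l}` and second fundamental form collinear with `b`, either the
Gauss curvature `K = ν₁ν₂ - λ²` or the invariant `β = β₁² + β₂²` vanishes:
`(ν₁ν₂ - λ²)·(β₁² + β₂²) = 0` at every point. -/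
theorem flat_points_K_or_beta_zero
    (D : Set (ℝ × ℝ)) (hDopen : IsOpen D)
    (z b l : ℝ × ℝ → EuclideanSpace ℝ (Fin 4))
    (hz : ContDiffOn ℝ (⊤ : ℕ∞) z D) (hb : ContDiffOn ℝ (⊤ : ℕ∞) b D) (hl : ContDiffOn ℝ (⊤ : ℕ∞) l D)
    (E G : ℝ × ℝ → ℝ)
    (hE : ∀ p, E p = ⟪pu z p, pu z p⟫) (hG : ∀ p, G p = ⟪pv z p, pv z p⟫)
    (hEpos : ∀ p ∈ D, 0 < E p) (hGpos : ∀ p ∈ D, 0 < G p)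
    (hFzero : ∀ p ∈ D, ⟪pu z p, pv z p⟫ = 0)
    (hbunit : ∀ p ∈ D, ⟪b p, b p⟫ = 1) (hlunit : ∀ p ∈ D, ⟪l p, l p⟫ = 1)
    (hbl : ∀ p ∈ D, ⟪b p, l p⟫ = 0)
    (hbtan : ∀ p ∈ D, ⟪pu z p, b p⟫ = 0 ∧ ⟪pv z p, b p⟫ = 0)
    (hltan : ∀ p ∈ D, ⟪pu z p, l p⟫ = 0 ∧ ⟪pv z p, l p⟫ = 0)
    (hcol : ∀ p ∈ D, ⟪pu (pu z) p, l p⟫ = 0 ∧ ⟪pv (pu z) p, l p⟫ = 0 ∧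
      ⟪pv (pv z) p, l p⟫ = 0)
    (ν₁ ν₂ lam β₁ β₂ : ℝ × ℝ → ℝ)
    (hν₁ : ∀ p, ν₁ p = ⟪pu (pu z) p, b p⟫ / E p)
    (hlam : ∀ p, lam p = ⟪pv (pu z) p, b p⟫ / Real.sqrt (E p * G p))
    (hν₂ : ∀ p, ν₂ p = ⟪pv (pv z) p, b p⟫ / G p)
    (hβ₁ : ∀ p, β₁ p = ⟪pu b p, l p⟫ / Real.sqrt (E p))
    (hβ₂ : ∀ p, β₂ p = ⟪pv b p, l p⟫ / Real.sqrt (G p)) :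
    ∀ p ∈ D, (ν₁ p * ν₂ p - lam p ^ 2) * (β₁ p ^ 2 + β₂ p ^ 2) = 0 := by
  intro p hp
  -- smoothness at points of D
  have hzD : ∀ q ∈ D, ContDiffAt ℝ (⊤ : ℕ∞) z q := fun q hq => hz.contDiffAt (hDopen.mem_nhds hq)
  have hbD : ∀ q ∈ D, ContDiffAt ℝ (⊤ : ℕ∞) b q := fun q hq => hb.contDiffAt (hDopen.mem_nhds hq)
  have hlD : ∀ q ∈ D, ContDiffAt ℝ (⊤ : ℕ∞) l q := fun q hq => hl.contDiffAt (hDopen.mem_nhds hq)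
  have dz : ∀ q ∈ D, DifferentiableAt ℝ z q := fun q hq => (hzD q hq).differentiableAt (by simp)
  have db : ∀ q ∈ D, DifferentiableAt ℝ b q := fun q hq => (hbD q hq).differentiableAt (by simp)
  have dl : ∀ q ∈ D, DifferentiableAt ℝ l q := fun q hq => (hlD q hq).differentiableAt (by simp)
  have dzu : ∀ q ∈ D, DifferentiableAt ℝ (pu z) q := fun q hq =>
    (contDiffAt_fderiv_apply (hzD q hq) (1,0)).differentiableAt (by simp)
  have dzv : ∀ q ∈ D, DifferentiableAt ℝ (pv z) q := fun q hq =>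
    (contDiffAt_fderiv_apply (hzD q hq) (0,1)).differentiableAt (by simp)
  have dlu : ∀ q ∈ D, DifferentiableAt ℝ (pu l) q := fun q hq =>
    (contDiffAt_fderiv_apply (hlD q hq) (1,0)).differentiableAt (by simp)
  have dlv : ∀ q ∈ D, DifferentiableAt ℝ (pv l) q := fun q hq =>
    (contDiffAt_fderiv_apply (hlD q hq) (0,1)).differentiableAt (by simp)
  -- Step 1: ⟪l', z'⟫ = 0 identities on D
  have hlu_zu : ∀ q ∈ D, ⟪pu l q, pu z q⟫ = 0 := by
    intro q hq
    have h := inner_const_rule hDopen (dzu q hq) (dl q hq) (fun r hr => (hltan r hr).1) hq (1,0)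
    have h2 : ⟪pu z q, pu l q⟫ + ⟪pu (pu z) q, l q⟫ = 0 := h
    rw [(hcol q hq).1] at h2
    rw [real_inner_comm]
    linarith
  have hlv_zu : ∀ q ∈ D, ⟪pv l q, pu z q⟫ = 0 := by
    intro q hq
    have h2 : ⟪pu z q, pv l q⟫ + ⟪pv (pu z) q, l q⟫ = 0 :=
      inner_const_rule hDopen (dzu q hq) (dl q hq) (fun r hr => (hltan r hr).1) hq (0,1)
    rw [(hcol q hq).2.1] at h2
    rw [real_inner_comm]
    linarith
  have hlu_zv : ∀ q ∈ D, ⟪pu l q, pv z q⟫ = 0 := by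
    intro q hq
    have h2 : ⟪pv z q, pu l q⟫ + ⟪pu (pv z) q, l q⟫ = 0 :=
      inner_const_rule hDopen (dzv q hq) (dl q hq) (fun r hr => (hltan r hr).2) hq (1,0)
    rw [← pv_pu_symm (hzD q hq), (hcol q hq).2.1] at h2
    rw [real_inner_comm]
    linarith
  have hlv_zv : ∀ q ∈ D, ⟪pv l q, pv z q⟫ = 0 := by
    intro q hq
    have h2 : ⟪pv z q, pv l q⟫ + ⟪pv (pv z) q, l q⟫ = 0 :=
      inner_const_rule hDopen (dzv q hq) (dl q hq) (fun r hr => (hltan r hr).2) hq (0,1)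
    rw [(hcol q hq).2.2] at h2
    rw [real_inner_comm]
    linarith
  -- ⟪l', b⟫ and ⟪l', l⟫ at p
  have hlu_b : ⟪pu l p, b p⟫ = -⟪pu b p, l p⟫ := by
    have h2 : ⟪b p, pu l p⟫ + ⟪pu b p, l p⟫ = 0 :=
      inner_const_rule hDopen (db p hp) (dl p hp) hbl hp (1,0)
    rw [real_inner_comm]
    linarith
  have hlv_b : ⟪pv l p, b p⟫ = -⟪pv b p, l p⟫ := by
    have h2 : ⟪b p, pv l p⟫ + ⟪pv b p, l p⟫ = 0 :=
      inner_const_rule hDopen (db p hp) (dl p hp) hbl hp (0,1)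
    rw [real_inner_comm]
    linarith
  have hlu_l : ⟪pu l p, l p⟫ = 0 := by
    have h2 : ⟪l p, pu l p⟫ + ⟪pu l p, l p⟫ = 0 :=
      inner_const_rule hDopen (dl p hp) (dl p hp) hlunit hp (1,0)
    rw [real_inner_comm] at h2
    linarith
  have hlv_l : ⟪pv l p, l p⟫ = 0 := by
    have h2 : ⟪l p, pv l p⟫ + ⟪pv l p, l p⟫ = 0 :=
      inner_const_rule hDopen (dl p hp) (dl p hp) hlunit hp (0,1)
    rw [real_inner_comm] at h2
    linarith
  -- Step 2: differentiate step-1 identities and use symmetry of second derivatives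
  have keyI : ⟪pu l p, pv (pu z) p⟫ = ⟪pv l p, pu (pu z) p⟫ := by
    have c1 : ⟪pu l p, pv (pu z) p⟫ + ⟪pv (pu l) p, pu z p⟫ = 0 :=
      inner_const_rule hDopen (dlu p hp) (dzu p hp) hlu_zu hp (0,1)
    have c2 : ⟪pv l p, pu (pu z) p⟫ + ⟪pu (pv l) p, pu z p⟫ = 0 :=
      inner_const_rule hDopen (dlv p hp) (dzu p hp) hlv_zu hp (1,0)
    rw [pv_pu_symm (hlD p hp)] at c1
    linarith
  have keyII : ⟪pu l p, pv (pv z) p⟫ = ⟪pv l p, pu (pv z) p⟫ := by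
    have c3 : ⟪pu l p, pv (pv z) p⟫ + ⟪pv (pu l) p, pv z p⟫ = 0 :=
      inner_const_rule hDopen (dlu p hp) (dzv p hp) hlu_zv hp (0,1)
    have c4 : ⟪pv l p, pu (pv z) p⟫ + ⟪pu (pv l) p, pv z p⟫ = 0 :=
      inner_const_rule hDopen (dlv p hp) (dzv p hp) hlv_zv hp (1,0)
    rw [pv_pu_symm (hlD p hp)] at c3
    linarith
  -- orthonormal frame at p
  set e := Real.sqrt (E p) with he_def
  set g := Real.sqrt (G p) with hg_def
  have hEp := hEpos p hp
  have hGp := hGpos p hp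
  have he2 : e * e = E p := Real.mul_self_sqrt hEp.le
  have hg2 : g * g = G p := Real.mul_self_sqrt hGp.le
  have he0 : e ≠ 0 := by positivity
  have hg0 : g ≠ 0 := by positivity
  have hzz : ⟪pu z p, pu z p⟫ = e * e := by rw [he2]; exact (hE p).symm
  have hww : ⟪pv z p, pv z p⟫ = g * g := by rw [hg2]; exact (hG p).symm
  have hxy : ⟪pu z p, pv z p⟫ = 0 := hFzero p hp
  have hxb : ⟪pu z p, b p⟫ = 0 := (hbtan p hp).1
  have hxl : ⟪pu z p, l p⟫ = 0 := (hltan p hp).1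
  have hyb : ⟪pv z p, b p⟫ = 0 := (hbtan p hp).2
  have hyl : ⟪pv z p, l p⟫ = 0 := (hltan p hp).2
  have hyx : ⟪pv z p, pu z p⟫ = 0 := by rw [real_inner_comm]; exact hxy
  have hbx : ⟪b p, pu z p⟫ = 0 := by rw [real_inner_comm]; exact hxb
  have hlx : ⟪l p, pu z p⟫ = 0 := by rw [real_inner_comm]; exact hxl
  have hby : ⟪b p, pv z p⟫ = 0 := by rw [real_inner_comm]; exact hyb
  have hly : ⟪l p, pv z p⟫ = 0 := by rw [real_inner_comm]; exact hyl
  have hlb : ⟪l p, b p⟫ = 0 := by rw [real_inner_comm]; exact hbl p hp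
  set v : Fin 4 → EuclideanSpace ℝ (Fin 4) :=
    ![e⁻¹ • pu z p, g⁻¹ • pv z p, b p, l p] with hv_def
  have hon : Orthonormal ℝ v := by
    rw [orthonormal_iff_ite]
    intro i j
    fin_cases i <;> fin_cases j <;>
      simp only [hv_def, Matrix.cons_val_zero, Matrix.cons_val_one, Matrix.head_cons,
        Matrix.cons_val_two, Matrix.tail_cons, Matrix.cons_val_three, Fin.isValue,
        real_inner_smul_left, real_inner_smul_right, hzz, hww, hxy, hyx, hxb, hbx,
        hxl, hlx, hyb, hby, hyl, hly, hbunit p hp, hlunit p hp, hbl p hp, hlb,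
        Fin.mk_zero, Fin.mk_one, mul_zero, mul_one, Fin.reduceEq, if_true, if_false,
        reduceIte, Fin.reduceFinMk] <;>
      field_simp
  have hspan : ⊤ ≤ Submodule.span ℝ (Set.range v) := by
    rw [hon.linearIndependent.span_eq_top_of_card_eq_finrank]
    simp [finrank_euclideanSpace]
  set B : OrthonormalBasis (Fin 4) ℝ (EuclideanSpace ℝ (Fin 4)) :=
    OrthonormalBasis.mk hon hspan with hB_def
  have hBcoe : ∀ i, B i = v i := fun i => by rw [hB_def, OrthonormalBasis.coe_mk]
  have frame : ∀ w w' : EuclideanSpace ℝ (Fin 4), ⟪w, pu z p⟫ = 0 → ⟪w, pv z p⟫ = 0 →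
      ⟪l p, w'⟫ = 0 → ⟪w, w'⟫ = ⟪w, b p⟫ * ⟪b p, w'⟫ := by
    intro w w' h1 h2 h3
    have hP := B.sum_inner_mul_inner w w'
    rw [Fin.sum_univ_four, hBcoe 0, hBcoe 1, hBcoe 2, hBcoe 3] at hP
    simp only [hv_def, Matrix.cons_val_zero, Matrix.cons_val_one, Matrix.head_cons,
      Matrix.cons_val_two, Matrix.tail_cons, Matrix.cons_val_three,
      real_inner_smul_left, real_inner_smul_right, h1, h2, h3] at hP
    rw [← hP]
    ring
  -- apply frame
  have hlzuu : ⟪l p, pu (pu z) p⟫ = 0 := by rw [real_inner_comm]; exact (hcol p hp).1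
  have hlzuv : ⟪l p, pv (pu z) p⟫ = 0 := by rw [real_inner_comm]; exact (hcol p hp).2.1
  have hlzvv : ⟪l p, pv (pv z) p⟫ = 0 := by rw [real_inner_comm]; exact (hcol p hp).2.2
  have fI1 : ⟪pu l p, pv (pu z) p⟫ = ⟪pu l p, b p⟫ * ⟪b p, pv (pu z) p⟫ :=
    frame _ _ (hlu_zu p hp) (hlu_zv p hp) hlzuv
  have fI2 : ⟪pv l p, pu (pu z) p⟫ = ⟪pv l p, b p⟫ * ⟪b p, pu (pu z) p⟫ :=
    frame _ _ (hlv_zu p hp) (hlv_zv p hp) hlzuu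
  have fII1 : ⟪pu l p, pv (pv z) p⟫ = ⟪pu l p, b p⟫ * ⟪b p, pv (pv z) p⟫ :=
    frame _ _ (hlu_zu p hp) (hlu_zv p hp) hlzvv
  have fII2 : ⟪pv l p, pu (pv z) p⟫ = ⟪pv l p, b p⟫ * ⟪b p, pv (pu z) p⟫ := by
    rw [pv_pu_symm (hzD p hp)] at *
    exact frame _ _ (hlv_zu p hp) (hlv_zv p hp) hlzuv
  -- scalar equations
  set a := ⟪pu b p, l p⟫ with ha_def
  set a' := ⟪pv b p, l p⟫ with ha'_def
  set m1 := ⟪pu (pu z) p, b p⟫ with hm1_def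
  set m := ⟪pv (pu z) p, b p⟫ with hm_def
  set m2 := ⟪pv (pv z) p, b p⟫ with hm2_def
  have hbm1 : ⟪b p, pu (pu z) p⟫ = m1 := by rw [real_inner_comm]
  have hbm : ⟪b p, pv (pu z) p⟫ = m := by rw [real_inner_comm]
  have hbm2 : ⟪b p, pv (pv z) p⟫ = m2 := by rw [real_inner_comm]
  have key1 : a * m = a' * m1 := by
    have := keyI
    rw [fI1, fI2, hlu_b, hlv_b, hbm, hbm1] at this
    linear_combination -this
  have key2 : a * m2 = a' * m := by
    have := keyII
    rw [fII1, fII2, hlu_b, hlv_b, hbm, hbm2] at this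
    linear_combination -this
  -- final algebra
  have hA : (m1 * m2 - m ^ 2) * a ^ 2 = 0 := by linear_combination (m1 * a) * key2 - (a * m) * key1
  have hA' : (m1 * m2 - m ^ 2) * a' ^ 2 = 0 := by
    linear_combination (a' * m) * key2 - (m2 * a') * key1
  have heg : Real.sqrt (E p * G p) = e * g := Real.sqrt_mul hEp.le (G p)
  rw [hν₁ p, hν₂ p, hlam p, hβ₁ p, hβ₂ p, heg, ← he_def, ← hg_def,
    ← hm1_def, ← hm_def, ← hm2_def, ← ha_def, ← ha'_def, ← he2, ← hg2]
  field_simp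
  linear_combination (g^2) * hA + (e^2) * hA'
end

section
/- Let D ⊆ ℝ² be open, let z, b, l : D → E⁴ be smooth maps such that at each point ⟨z_u, z_v⟩ = 0, E := ⟨z_u, z_u⟩ > 0, G := ⟨z_v, z_v⟩ > 0, and the four vectors z_u/√E, z_v/√G, b, l form an orthonormal frame of E⁴. Assume ⟨z_uu, l⟩ = 0 and ⟨z_vv, l⟩ = 0 on D. Define ν₁ = ⟨z_uu, b⟩/E, ν₂ = ⟨z_vv, b⟩/G, μ = ⟨z_uv, l⟩/√(EG), β₁ = ⟨∂b/∂u, l⟩/√E, β₂ = ⟨∂b/∂v, l⟩/√G, γ₁ = −(1/√G)·∂(ln √E)/∂v, γ₂ = −(1/√E)·∂(ln √G)/∂u. Then at every point of D, (1/√E)·∂β₂/∂u − (1/√G)·∂β₁/∂v + γ₁β₁ − γ₂β₂ = −(ν₁ − ν₂)·μ. In particular, the curvature of the normal connection equals the invariant κ = (ν₁ − ν₂)·μ, so the normal connection is flat if and only if κ = 0. -/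
open scoped RealInnerProductSpace

section Aux

variable {F : Type*} [NormedAddCommGroup F] [NormedSpace ℝ F]
variable {s : Set (ℝ × ℝ)} {p : ℝ × ℝ}

lemma contDiffOn_pu {f : ℝ × ℝ → F} (hf : ContDiffOn ℝ (⊤ : ℕ∞) f s) (hs : IsOpen s) :
    ContDiffOn ℝ (⊤ : ℕ∞) (pu f) s := by
  unfold pu
  exact (hf.fderiv_of_isOpen hs (by simp)).clm_apply contDiffOn_const

lemma contDiffOn_pv {f : ℝ × ℝ → F} (hf : ContDiffOn ℝ (⊤ : ℕ∞) f s) (hs : IsOpen s) :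
    ContDiffOn ℝ (⊤ : ℕ∞) (pv f) s := by
  unfold pv
  exact (hf.fderiv_of_isOpen hs (by simp)).clm_apply contDiffOn_const

lemma diffAt_of_cdo {f : ℝ × ℝ → F} (hf : ContDiffOn ℝ (⊤ : ℕ∞) f s) (hs : IsOpen s) (hp : p ∈ s) :
    DifferentiableAt ℝ f p :=
  (hf.contDiffAt (hs.mem_nhds hp)).differentiableAt (by simp)

lemma pu_pv_symm {f : ℝ × ℝ → F} (hf : ContDiffOn ℝ (⊤ : ℕ∞) f s) (hs : IsOpen s) (hp : p ∈ s) :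
    pu (pv f) p = pv (pu f) p := by
  have hf' : ∀ᶠ q in nhds p, HasFDerivAt f (fderiv ℝ f q) q := by
    filter_upwards [hs.mem_nhds hp] with q hq
    exact ((hf.contDiffAt (hs.mem_nhds hq)).differentiableAt (by simp)).hasFDerivAt
  have hf2 : HasFDerivAt (fderiv ℝ f) (fderiv ℝ (fderiv ℝ f) p) p :=
    (((hf.fderiv_of_isOpen (m := (⊤ : ℕ∞)) hs (by simp)).contDiffAt (hs.mem_nhds hp)).differentiableAt
      (by simp)).hasFDerivAt
  have hsymm := second_derivative_symmetric_of_eventually hf' hf2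
    ((1 : ℝ), (0 : ℝ)) ((0 : ℝ), (1 : ℝ))
  have key : ∀ v w : ℝ × ℝ, fderiv ℝ (fun q => fderiv ℝ f q w) p v
      = fderiv ℝ (fderiv ℝ f) p v w := by
    intro v w
    have h := ((ContinuousLinearMap.apply ℝ F w).hasFDerivAt.comp p hf2).fderiv
    have h2 : (fun q => fderiv ℝ f q w) = (ContinuousLinearMap.apply ℝ F w) ∘ (fderiv ℝ f) :=
      rfl
    rw [h2, h]; rfl
  have e1 : pu (pv f) p = fderiv ℝ (fun q => fderiv ℝ f q ((0:ℝ),(1:ℝ))) p (1, 0) := rfl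
  have e2 : pv (pu f) p = fderiv ℝ (fun q => fderiv ℝ f q ((1:ℝ),(0:ℝ))) p (0, 1) := rfl
  rw [e1, e2, key, key]
  exact hsymm

end Aux

section Aux2

variable {𝔽 : Type*} [NormedAddCommGroup 𝔽] [InnerProductSpace ℝ 𝔽]
variable {s : Set (ℝ × ℝ)} {p : ℝ × ℝ}

lemma inner_shift {f g : ℝ × ℝ → 𝔽} {c : ℝ} (hs : IsOpen s) (hp : p ∈ s)
    (hf : DifferentiableAt ℝ f p) (hg : DifferentiableAt ℝ g p)
    (hconst : ∀ q ∈ s, ⟪f q, g q⟫ = c) (w : ℝ × ℝ) :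
    ⟪f p, fderiv ℝ g p w⟫ = -⟪fderiv ℝ f p w, g p⟫ := by
  have heq : (fun q => ⟪f q, g q⟫) =ᶠ[nhds p] fun _ => c := by
    filter_upwards [hs.mem_nhds hp] with q hq using hconst q hq
  have h0 : fderiv ℝ (fun q => ⟪f q, g q⟫) p = 0 := by
    rw [heq.fderiv_eq]; exact fderiv_const_apply c
  have h1 := fderiv_inner_apply (𝕜 := ℝ) hf hg w
  rw [h0] at h1
  simp only [ContinuousLinearMap.zero_apply] at h1
  linarith [h1]

lemma inner_self_deriv_zero {f : ℝ × ℝ → 𝔽} {c : ℝ} (hs : IsOpen s) (hp : p ∈ s)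
    (hf : DifferentiableAt ℝ f p) (hconst : ∀ q ∈ s, ⟪f q, f q⟫ = c) (w : ℝ × ℝ) :
    ⟪f p, fderiv ℝ f p w⟫ = 0 := by
  have h := inner_shift hs hp hf hf hconst w
  rw [real_inner_comm] at h
  rw [real_inner_comm]
  linarith

lemma parseval4 {v : Fin 4 → EuclideanSpace ℝ (Fin 4)} (hv : Orthonormal ℝ v)
    (w₁ w₂ : EuclideanSpace ℝ (Fin 4)) :
    ⟪w₁, w₂⟫ = ∑ i, ⟪w₁, v i⟫ * ⟪v i, w₂⟫ := by
  have hcard : Fintype.card (Fin 4) = Module.finrank ℝ (EuclideanSpace ℝ (Fin 4)) := by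
    simp
  let B := basisOfLinearIndependentOfCardEqFinrank hv.linearIndependent hcard
  have hB : ⇑B = v := coe_basisOfLinearIndependentOfCardEqFinrank _ _
  have hon : Orthonormal ℝ ⇑B := hB ▸ hv
  have := (B.toOrthonormalBasis hon).sum_inner_mul_inner w₁ w₂
  rw [← this]
  congr 1
  ext i
  rw [Module.Basis.coe_toOrthonormalBasis, hB]

end Aux2


lemma orthonormal_four {a c d e : EuclideanSpace ℝ (Fin 4)}
    (h1 : ⟪a,a⟫ = 1) (h2 : ⟪a,c⟫ = 0) (h3 : ⟪a,d⟫ = 0) (h4 : ⟪a,e⟫ = 0)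
    (h5 : ⟪c,c⟫ = 1) (h6 : ⟪c,d⟫ = 0) (h7 : ⟪c,e⟫ = 0) (h8 : ⟪d,d⟫ = 1)
    (h9 : ⟪d,e⟫ = 0) (h10 : ⟪e,e⟫ = 1) :
    Orthonormal ℝ ![a,c,d,e] := by
  rw [orthonormal_iff_ite]
  intro i j
  have hc : ∀ x y : EuclideanSpace ℝ (Fin 4), ⟪x,y⟫ = ⟪y,x⟫ :=
    fun x y => real_inner_comm y x
  fin_cases i <;> fin_cases j <;>
    simp only [Matrix.cons_val_zero, Matrix.cons_val_one, Matrix.head_cons,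
      Matrix.cons_val_two, Matrix.cons_val_three, Matrix.tail_cons, Fin.isValue] <;>
    first
      | simpa using h1
      | simpa using h5
      | simpa using h8
      | simpa using h10
      | (rw [if_neg (by decide)]
         first
           | exact h2 | exact h3 | exact h4 | exact h6 | exact h7 | exact h9
           | (rw [hc]
              first
                | exact h2 | exact h3 | exact h4 | exact h6 | exact h7
                | exact h9))

set_option maxHeartbeats 1000000 in
/-- The Ricci (normal curvature) equation for a surface in `𝔼⁴` with geometric frame
`{z_u/√E, z_v/√G, b, l}`: `x(β₂) - y(β₁) + γ₁β₁ - γ₂β₂ = -(ν₁ - ν₂)·μ`. In particular,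
the curvature of the normal connection equals `ϰ = (ν₁ - ν₂)·μ`, so the normal
connection is flat iff `ϰ = 0`. -/
theorem normal_curvature_equals_kappa
    (D : Set (ℝ × ℝ)) (hDopen : IsOpen D)
    (z b l : ℝ × ℝ → EuclideanSpace ℝ (Fin 4))
    (hz : ContDiffOn ℝ (⊤ : ℕ∞) z D) (hb : ContDiffOn ℝ (⊤ : ℕ∞) b D) (hl : ContDiffOn ℝ (⊤ : ℕ∞) l D)
    (E G : ℝ × ℝ → ℝ)
    (hE : ∀ p, E p = ⟪pu z p, pu z p⟫) (hG : ∀ p, G p = ⟪pv z p, pv z p⟫)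
    (hEpos : ∀ p ∈ D, 0 < E p) (hGpos : ∀ p ∈ D, 0 < G p)
    (hFzero : ∀ p ∈ D, ⟪pu z p, pv z p⟫ = 0)
    (hbunit : ∀ p ∈ D, ⟪b p, b p⟫ = 1) (hlunit : ∀ p ∈ D, ⟪l p, l p⟫ = 1)
    (hbl : ∀ p ∈ D, ⟪b p, l p⟫ = 0)
    (hbtan : ∀ p ∈ D, ⟪pu z p, b p⟫ = 0 ∧ ⟪pv z p, b p⟫ = 0)
    (hltan : ∀ p ∈ D, ⟪pu z p, l p⟫ = 0 ∧ ⟪pv z p, l p⟫ = 0)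
    (hM : ∀ p ∈ D, ⟪pu (pu z) p, l p⟫ = 0 ∧ ⟪pv (pv z) p, l p⟫ = 0)
    (ν₁ ν₂ μ β₁ β₂ γ₁ γ₂ : ℝ × ℝ → ℝ)
    (hν₁ : ∀ p, ν₁ p = ⟪pu (pu z) p, b p⟫ / E p)
    (hν₂ : ∀ p, ν₂ p = ⟪pv (pv z) p, b p⟫ / G p)
    (hμ : ∀ p, μ p = ⟪pv (pu z) p, l p⟫ / Real.sqrt (E p * G p))
    (hβ₁ : ∀ p, β₁ p = ⟪pu b p, l p⟫ / Real.sqrt (E p))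
    (hβ₂ : ∀ p, β₂ p = ⟪pv b p, l p⟫ / Real.sqrt (G p))
    (hγ₁ : ∀ p, γ₁ p = -(1 / Real.sqrt (G p))
      * pv (fun s => Real.log (Real.sqrt (E s))) p)
    (hγ₂ : ∀ p, γ₂ p = -(1 / Real.sqrt (E p))
      * pu (fun s => Real.log (Real.sqrt (G s))) p) :
    ∀ p ∈ D, (1 / Real.sqrt (E p)) * pu β₂ p - (1 / Real.sqrt (G p)) * pv β₁ p
      + γ₁ p * β₁ p - γ₂ p * β₂ p = -(ν₁ p - ν₂ p) * μ p := by
  intro p hp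
  -- differentiability bookkeeping
  have hzu := contDiffOn_pu hz hDopen
  have hzv := contDiffOn_pv hz hDopen
  have db := diffAt_of_cdo hb hDopen hp
  have dl := diffAt_of_cdo hl hDopen hp
  have dzu := diffAt_of_cdo hzu hDopen hp
  have dzv := diffAt_of_cdo hzv hDopen hp
  have dbu := diffAt_of_cdo (contDiffOn_pu hb hDopen) hDopen hp
  have dbv := diffAt_of_cdo (contDiffOn_pv hb hDopen) hDopen hp
  have dlu := diffAt_of_cdo (contDiffOn_pu hl hDopen) hDopen hp
  have dlv := diffAt_of_cdo (contDiffOn_pv hl hDopen) hDopen hp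
  have hEfun : E = fun q => ⟪pu z q, pu z q⟫ := funext hE
  have hGfun : G = fun q => ⟪pv z q, pv z q⟫ := funext hG
  have hEcd : ContDiffOn ℝ (⊤ : ℕ∞) E D := by rw [hEfun]; exact hzu.inner ℝ hzu
  have hGcd : ContDiffOn ℝ (⊤ : ℕ∞) G D := by rw [hGfun]; exact hzv.inner ℝ hzv
  have dE : DifferentiableAt ℝ E p := diffAt_of_cdo hEcd hDopen hp
  have dG : DifferentiableAt ℝ G p := diffAt_of_cdo hGcd hDopen hp
  have hEp : 0 < E p := hEpos p hp
  have hGp : 0 < G p := hGpos p hp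
  have hsEne : Real.sqrt (E p) ≠ 0 := ne_of_gt (Real.sqrt_pos.2 hEp)
  have hsGne : Real.sqrt (G p) ≠ 0 := ne_of_gt (Real.sqrt_pos.2 hGp)
  have hsE2 : Real.sqrt (E p) ^ 2 = E p := Real.sq_sqrt hEp.le
  have hsG2 : Real.sqrt (G p) ^ 2 = G p := Real.sq_sqrt hGp.le
  -- symmetry of second derivatives
  have hzsym : pu (pv z) p = pv (pu z) p := pu_pv_symm hz hDopen hp
  have hbsym : pu (pv b) p = pv (pu b) p := pu_pv_symm hb hDopen hp
  -- inner-product shift identities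
  have hZub_u : ⟪pu z p, pu b p⟫ = -⟪pu (pu z) p, b p⟫ :=
    inner_shift hDopen hp dzu db (fun q hq => (hbtan q hq).1) (1, 0)
  have hZub_v : ⟪pu z p, pv b p⟫ = -⟪pv (pu z) p, b p⟫ :=
    inner_shift hDopen hp dzu db (fun q hq => (hbtan q hq).1) (0, 1)
  have hZvb_u : ⟪pv z p, pu b p⟫ = -⟪pu (pv z) p, b p⟫ :=
    inner_shift hDopen hp dzv db (fun q hq => (hbtan q hq).2) (1, 0)
  have hZvb_v : ⟪pv z p, pv b p⟫ = -⟪pv (pv z) p, b p⟫ :=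
    inner_shift hDopen hp dzv db (fun q hq => (hbtan q hq).2) (0, 1)
  have hZul_u : ⟪pu z p, pu l p⟫ = -⟪pu (pu z) p, l p⟫ :=
    inner_shift hDopen hp dzu dl (fun q hq => (hltan q hq).1) (1, 0)
  have hZul_v : ⟪pu z p, pv l p⟫ = -⟪pv (pu z) p, l p⟫ :=
    inner_shift hDopen hp dzu dl (fun q hq => (hltan q hq).1) (0, 1)
  have hZvl_u : ⟪pv z p, pu l p⟫ = -⟪pu (pv z) p, l p⟫ :=
    inner_shift hDopen hp dzv dl (fun q hq => (hltan q hq).2) (1, 0)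
  have hZvl_v : ⟪pv z p, pv l p⟫ = -⟪pv (pv z) p, l p⟫ :=
    inner_shift hDopen hp dzv dl (fun q hq => (hltan q hq).2) (0, 1)
  have hbb_u : ⟪b p, pu b p⟫ = 0 := inner_self_deriv_zero hDopen hp db hbunit (1, 0)
  have hbb_v : ⟪b p, pv b p⟫ = 0 := inner_self_deriv_zero hDopen hp db hbunit (0, 1)
  have hll_u : ⟪l p, pu l p⟫ = 0 := inner_self_deriv_zero hDopen hp dl hlunit (1, 0)
  have hll_v : ⟪l p, pv l p⟫ = 0 := inner_self_deriv_zero hDopen hp dl hlunit (0, 1)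
  have hbl_u : ⟪b p, pu l p⟫ = -⟪pu b p, l p⟫ := inner_shift hDopen hp db dl hbl (1, 0)
  have hbl_v : ⟪b p, pv l p⟫ = -⟪pv b p, l p⟫ := inner_shift hDopen hp db dl hbl (0, 1)
  -- the orthonormal frame
  have hEinner : ⟪pu z p, pu z p⟫ = E p := (hE p).symm
  have hGinner : ⟪pv z p, pv z p⟫ = G p := (hG p).symm
  have hFcomm : ⟪pv z p, pu z p⟫ = 0 := by rw [real_inner_comm]; exact hFzero p hp
  have hbZu : ⟪b p, pu z p⟫ = 0 := by rw [real_inner_comm]; exact (hbtan p hp).1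
  have hbZv : ⟪b p, pv z p⟫ = 0 := by rw [real_inner_comm]; exact (hbtan p hp).2
  have hlZu : ⟪l p, pu z p⟫ = 0 := by rw [real_inner_comm]; exact (hltan p hp).1
  have hlZv : ⟪l p, pv z p⟫ = 0 := by rw [real_inner_comm]; exact (hltan p hp).2
  have hlb : ⟪l p, b p⟫ = 0 := by rw [real_inner_comm]; exact hbl p hp
  have hEinv1 : (Real.sqrt (E p))⁻¹ * ((Real.sqrt (E p))⁻¹ * E p) = 1 := by
    rw [← hsE2]; field_simp; rw [Real.sqrt_sq (Real.sqrt_nonneg _)]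
  have hGinv1 : (Real.sqrt (G p))⁻¹ * ((Real.sqrt (G p))⁻¹ * G p) = 1 := by
    rw [← hsG2]; field_simp; rw [Real.sqrt_sq (Real.sqrt_nonneg _)]
  have hvon : Orthonormal ℝ
      ![(Real.sqrt (E p))⁻¹ • pu z p, (Real.sqrt (G p))⁻¹ • pv z p, b p, l p] := by
    apply orthonormal_four
    · rw [real_inner_smul_left, real_inner_smul_right, hEinner]; exact hEinv1
    · rw [real_inner_smul_left, real_inner_smul_right, hFzero p hp]; ring
    · rw [real_inner_smul_left, (hbtan p hp).1, mul_zero]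
    · rw [real_inner_smul_left, (hltan p hp).1, mul_zero]
    · rw [real_inner_smul_left, real_inner_smul_right, hGinner]; exact hGinv1
    · rw [real_inner_smul_left, (hbtan p hp).2, mul_zero]
    · rw [real_inner_smul_left, (hltan p hp).2, mul_zero]
    · exact hbunit p hp
    · exact hbl p hp
    · exact hlunit p hp
  -- Parseval computations
  have hP1 : ⟪pv b p, pu l p⟫
      = ⟪pv (pv z) p, b p⟫ * ⟪pv (pu z) p, l p⟫ * (G p)⁻¹ := by
    have h := parseval4 hvon (pv b p) (pu l p)
    rw [Fin.sum_univ_four] at h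
    have c1 : ⟪pv b p, pu z p⟫ = -⟪pv (pu z) p, b p⟫ := by
      rw [real_inner_comm]; exact hZub_v
    have c2 : ⟪pv b p, pv z p⟫ = -⟪pv (pv z) p, b p⟫ := by
      rw [real_inner_comm]; exact hZvb_v
    have c3 : ⟪pu z p, pu l p⟫ = 0 := by rw [hZul_u, (hM p hp).1, neg_zero]
    have c4 : ⟪pv z p, pu l p⟫ = -⟪pv (pu z) p, l p⟫ := by rw [hZvl_u, hzsym]
    have c5 : ⟪pv b p, b p⟫ = 0 := by rw [real_inner_comm]; exact hbb_v
    have hGinv2 : (Real.sqrt (G p))⁻¹ * (Real.sqrt (G p))⁻¹ = (G p)⁻¹ := by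
      rw [← mul_inv, Real.mul_self_sqrt hGp.le]
    rw [h]
    simp only [Matrix.cons_val_zero, Matrix.cons_val_one, Matrix.head_cons,
      Matrix.cons_val_two, Matrix.cons_val_three, Matrix.tail_cons,
      real_inner_smul_left, real_inner_smul_right]
    rw [c1, c2, c3, c4, c5, hll_u, ← hGinv2]
    ring
  have hP2 : ⟪pu b p, pv l p⟫
      = ⟪pu (pu z) p, b p⟫ * ⟪pv (pu z) p, l p⟫ * (E p)⁻¹ := by
    have h := parseval4 hvon (pu b p) (pv l p)
    rw [Fin.sum_univ_four] at h
    have c1 : ⟪pu b p, pu z p⟫ = -⟪pu (pu z) p, b p⟫ := by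
      rw [real_inner_comm]; exact hZub_u
    have c2 : ⟪pu b p, pv z p⟫ = -⟪pu (pv z) p, b p⟫ := by
      rw [real_inner_comm]; exact hZvb_u
    have c3 : ⟪pu z p, pv l p⟫ = -⟪pv (pu z) p, l p⟫ := hZul_v
    have c4 : ⟪pv z p, pv l p⟫ = 0 := by rw [hZvl_v, (hM p hp).2, neg_zero]
    have c5 : ⟪pu b p, b p⟫ = 0 := by rw [real_inner_comm]; exact hbb_u
    have hEinv2 : (Real.sqrt (E p))⁻¹ * (Real.sqrt (E p))⁻¹ = (E p)⁻¹ := by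
      rw [← mul_inv, Real.mul_self_sqrt hEp.le]
    rw [h]
    simp only [Matrix.cons_val_zero, Matrix.cons_val_one, Matrix.head_cons,
      Matrix.cons_val_two, Matrix.cons_val_three, Matrix.tail_cons,
      real_inner_smul_left, real_inner_smul_right]
    rw [c1, c2, c3, c4, c5, hll_v, ← hEinv2]
    ring
  -- derivatives of β₂, β₁ and the logarithmic terms
  have hsqG : HasFDerivAt (fun q => Real.sqrt (G q))
      ((1 / (2 * Real.sqrt (G p))) • fderiv ℝ G p) p :=
    dG.hasFDerivAt.sqrt (ne_of_gt hGp)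
  have hsqE : HasFDerivAt (fun q => Real.sqrt (E q))
      ((1 / (2 * Real.sqrt (E p))) • fderiv ℝ E p) p :=
    dE.hasFDerivAt.sqrt (ne_of_gt hEp)
  have hinvG : HasFDerivAt (fun q => (Real.sqrt (G q))⁻¹)
      ((-(Real.sqrt (G p) ^ 2)⁻¹) • ((1 / (2 * Real.sqrt (G p))) • fderiv ℝ G p)) p :=
    (hasDerivAt_inv hsGne).comp_hasFDerivAt p hsqG
  have hinvE : HasFDerivAt (fun q => (Real.sqrt (E q))⁻¹)
      ((-(Real.sqrt (E p) ^ 2)⁻¹) • ((1 / (2 * Real.sqrt (E p))) • fderiv ℝ E p)) p :=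
    (hasDerivAt_inv hsEne).comp_hasFDerivAt p hsqE
  have hN2 : HasFDerivAt (fun q => ⟪pv b q, l q⟫)
      (fderiv ℝ (fun q => ⟪pv b q, l q⟫) p) p := (dbv.inner ℝ dl).hasFDerivAt
  have hN1 : HasFDerivAt (fun q => ⟪pu b q, l q⟫)
      (fderiv ℝ (fun q => ⟪pu b q, l q⟫) p) p := (dbu.inner ℝ dl).hasFDerivAt
  have hβ₂fun : β₂ = fun q => ⟪pv b q, l q⟫ * (Real.sqrt (G q))⁻¹ := by
    funext q; rw [hβ₂ q, div_eq_mul_inv]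
  have hβ₁fun : β₁ = fun q => ⟪pu b q, l q⟫ * (Real.sqrt (E q))⁻¹ := by
    funext q; rw [hβ₁ q, div_eq_mul_inv]
  have hpuβ₂ : pu β₂ p
      = ⟪pv b p, l p⟫ * (-(Real.sqrt (G p) ^ 2)⁻¹
          * ((1 / (2 * Real.sqrt (G p))) * fderiv ℝ G p (1, 0)))
        + (Real.sqrt (G p))⁻¹ * (⟪pv b p, pu l p⟫ + ⟪pu (pv b) p, l p⟫) := by
    have h := (hN2.mul hinvG).fderiv
    have h2 : pu β₂ p
        = fderiv ℝ (fun q => ⟪pv b q, l q⟫ * (Real.sqrt (G q))⁻¹) p (1, 0) := by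
      rw [pu, hβ₂fun]
    rw [h2, show (fun q => ⟪pv b q, l q⟫ * (Real.sqrt (G q))⁻¹)
      = ((fun q => ⟪pv b q, l q⟫) * fun q => (Real.sqrt (G q))⁻¹) from rfl, h]
    simp only [ContinuousLinearMap.add_apply, ContinuousLinearMap.smul_apply,
      smul_eq_mul]
    rw [fderiv_inner_apply (𝕜 := ℝ) dbv dl]
    simp only [pu, pv]
    try ring
  have hpvβ₁ : pv β₁ p
      = ⟪pu b p, l p⟫ * (-(Real.sqrt (E p) ^ 2)⁻¹
          * ((1 / (2 * Real.sqrt (E p))) * fderiv ℝ E p (0, 1)))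
        + (Real.sqrt (E p))⁻¹ * (⟪pu b p, pv l p⟫ + ⟪pv (pu b) p, l p⟫) := by
    have h := (hN1.mul hinvE).fderiv
    have h2 : pv β₁ p
        = fderiv ℝ (fun q => ⟪pu b q, l q⟫ * (Real.sqrt (E q))⁻¹) p (0, 1) := by
      rw [pv, hβ₁fun]
    rw [h2, show (fun q => ⟪pu b q, l q⟫ * (Real.sqrt (E q))⁻¹)
      = ((fun q => ⟪pu b q, l q⟫) * fun q => (Real.sqrt (E q))⁻¹) from rfl, h]
    simp only [ContinuousLinearMap.add_apply, ContinuousLinearMap.smul_apply,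
      smul_eq_mul]
    rw [fderiv_inner_apply (𝕜 := ℝ) dbu dl]
    simp only [pu, pv]
    try ring
  have hγ₂val : pu (fun s => Real.log (Real.sqrt (G s))) p
      = (Real.sqrt (G p))⁻¹ * ((1 / (2 * Real.sqrt (G p))) * fderiv ℝ G p (1, 0)) := by
    rw [pu, (hsqG.log hsGne).fderiv]
    simp [smul_eq_mul, mul_assoc]
  have hγ₁val : pv (fun s => Real.log (Real.sqrt (E s))) p
      = (Real.sqrt (E p))⁻¹ * ((1 / (2 * Real.sqrt (E p))) * fderiv ℝ E p (0, 1)) := by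
    rw [pv, (hsqE.log hsEne).fderiv]
    simp [smul_eq_mul, mul_assoc]
  -- final assembly
  rw [hν₁ p, hν₂ p, hμ p, hβ₁ p, hβ₂ p, hγ₁ p, hγ₂ p, hpuβ₂, hpvβ₁, hγ₁val, hγ₂val,
    hbsym, hP1, hP2, Real.sqrt_mul hEp.le]
  set sE := Real.sqrt (E p) with hsEdef
  set sG := Real.sqrt (G p) with hsGdef
  rw [← hsE2, ← hsG2]
  field_simp
  ring
end

section
/- Let b, l be orthonormal vectors in E⁴ and ν₁, ν₂, λ, μ real numbers, and set σ₁₁ = ν₁·b, σ₁₂ = λ·b + μ·l, σ₂₂ = ν₂·b (the values of the second fundamental tensor in an orthonormal tangent frame, E = G = 1, F = 0). Define L = 2·det[(ν₁,0),(λ,μ)], M = det[(ν₁,0),(ν₂,0)], N = 2·det[(λ,μ),(ν₂,0)], k = LN − M², κ = (L + N)/2, and the mean curvature vector H = (σ₁₁ + σ₂₂)/2. Then k = −4ν₁ν₂μ², κ = (ν₁ − ν₂)·μ, and 4μ²·‖H‖² = κ² − k; in particular, if μ ≠ 0 then ‖H‖ = √(κ² − k)/(2|μ|). -/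
open scoped RealInnerProductSpace

/-- For a surface of general type in `𝔼⁴` with geometric frame `{x, y, b, l}` and
`σ(x,x) = ν₁b`, `σ(x,y) = λb + μl`, `σ(y,y) = ν₂b`, the invariants satisfy
`k = -4ν₁ν₂μ²`, `ϰ = (ν₁ - ν₂)μ` and `4μ²‖H‖² = ϰ² - k`; in particular, if `μ ≠ 0`
then `‖H‖ = √(ϰ² - k)/(2|μ|)`. -/
theorem mean_curvature_formula
    (b l : EuclideanSpace ℝ (Fin 4))
    (hb : ⟪b, b⟫ = 1) (hl : ⟪l, l⟫ = 1) (hbl : ⟪b, l⟫ = 0)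
    (ν₁ ν₂ lam μ : ℝ)
    (σ₁₁ σ₁₂ σ₂₂ : EuclideanSpace ℝ (Fin 4))
    (hσ₁₁ : σ₁₁ = ν₁ • b) (hσ₁₂ : σ₁₂ = lam • b + μ • l) (hσ₂₂ : σ₂₂ = ν₂ • b)
    (L M N k κ : ℝ)
    (hL : L = 2 * det2 ![ν₁, 0] ![lam, μ])
    (hM : M = det2 ![ν₁, 0] ![ν₂, 0])
    (hN : N = 2 * det2 ![lam, μ] ![ν₂, 0])
    (hk : k = L * N - M ^ 2)
    (hκ : κ = (L + N) / 2)
    (H : EuclideanSpace ℝ (Fin 4)) (hH : H = (2 : ℝ)⁻¹ • (σ₁₁ + σ₂₂)) :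
    k = -4 * ν₁ * ν₂ * μ ^ 2 ∧
    κ = (ν₁ - ν₂) * μ ∧
    4 * μ ^ 2 * ‖H‖ ^ 2 = κ ^ 2 - k ∧
    (μ ≠ 0 → ‖H‖ = Real.sqrt (κ ^ 2 - k) / (2 * |μ|)) := by
  have hnb : ‖b‖ = 1 := by
    have := real_inner_self_eq_norm_sq b
    nlinarith [norm_nonneg b]
  have hHval : H = ((ν₁ + ν₂) / 2) • b := by
    rw [hH, hσ₁₁, hσ₂₂, ← add_smul, smul_smul]; ring_nf
  have hnH : ‖H‖ = |(ν₁ + ν₂) / 2| := by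
    rw [hHval, norm_smul, hnb, Real.norm_eq_abs, mul_one]
  simp only [det2, Matrix.cons_val_zero, Matrix.cons_val_one, Matrix.head_cons] at hL hM hN
  have hk' : k = -4 * ν₁ * ν₂ * μ ^ 2 := by rw [hk, hL, hM, hN]; ring
  have hκ' : κ = (ν₁ - ν₂) * μ := by rw [hκ, hL, hN]; ring
  have hsq : 4 * μ ^ 2 * ‖H‖ ^ 2 = κ ^ 2 - k := by
    rw [hnH, sq_abs, hk', hκ']; ring
  refine ⟨hk', hκ', hsq, fun hμ => ?_⟩
  have h1 : κ ^ 2 - k = (2 * |μ| * ‖H‖) ^ 2 := by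
    rw [← hsq]; rw [mul_pow, mul_pow, sq_abs]; ring
  rw [h1, Real.sqrt_sq (by positivity)]
  field_simp
end

section
/- Let J ⊆ ℝ be an open interval and x₁, x₂, r : J → ℝ smooth functions with x₁'² + x₂'² + r'² = 1, r > 0, and κ := √(x₁''² + x₂''² + r''²) > 0 on J. Define the rotational surface z(u,v) = (x₁(u), x₂(u), r(u)·cos v, r(u)·sin v) in E⁴ and the normal fields e₁ = (1/κ)·(x₁'', x₂'', r''·cos v, r''·sin v) and e₂ = (1/κ)·(x₂'r'' − x₂''r', x₁''r' − x₁'r'', (x₁'x₂'' − x₁''x₂')·cos v, (x₁'x₂'' − x₁''x₂')·sin v). Then {e₁, e₂} is an orthonormal frame of the normal space of the surface, and with cᵏᵢⱼ = ⟨zᵢⱼ, e_k⟩ (second partial derivatives z_uu, z_uv, z_vv), Δ₁ = det(c₁₁, c₁₂), Δ₂ = det(c₁₁, c₂₂), Δ₃ = det(c₁₂, c₂₂), W = √(EG − F²), the coefficients satisfy L = 2Δ₁/W = 0, M = Δ₂/W = −(x₁'x₂'' − x₁''x₂'), N = 2Δ₃/W = 0; consequently the invariant κ-invariant = (EN + GL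 − 2FM)/(2(EG − F²)) = 0, i.e., the rotational surface has flat normal connection. -/
open scoped RealInnerProductSpace

private lemma hasDerivAt_E4 {a b c d : ℝ → ℝ} {a' b' c' d' : ℝ} {t : ℝ}
    (ha : HasDerivAt a a' t) (hb : HasDerivAt b b' t)
    (hc : HasDerivAt c c' t) (hd : HasDerivAt d d' t) :
    HasDerivAt (fun s => (WithLp.toLp 2 ![a s, b s, c s, d s] : EuclideanSpace ℝ (Fin 4)))
      (WithLp.toLp 2 ![a', b', c', d'] : EuclideanSpace ℝ (Fin 4)) t := by
  have h : HasDerivAt (fun s => (![a s, b s, c s, d s] : Fin 4 → ℝ))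
      (![a', b', c', d']) t := by
    rw [hasDerivAt_pi]
    intro i
    fin_cases i
    · simpa using ha
    · simpa using hb
    · simpa using hc
    · simpa using hd
  exact ((PiLp.continuousLinearEquiv 2 ℝ (fun _ : Fin 4 => ℝ)).symm.toContinuousLinearMap.hasFDerivAt.comp_hasDerivAt t h)

set_option maxHeartbeats 1000000 in
/-- For the rotational surface `z(u,v) = (x₁(u), x₂(u), r(u)·cos v, r(u)·sin v)` in `𝔼⁴`
generated by a unit-speed curve with `r > 0` and curvature `κ > 0`, the fields `e₁, e₂`
form an orthonormal frame of the normal space, the coefficients satisfy `L = 0`,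
`M = -(x₁'x₂'' - x₁''x₂')`, `N = 0`, and the invariant
`ϰ = (EN + GL - 2FM)/(2(EG - F²)) = 0`: the surface has flat normal connection. -/
theorem rotational_surface_flat_normal_connection
    (J : Set ℝ) (hJopen : IsOpen J) (hJconn : J.OrdConnected)
    (x₁ x₂ r : ℝ → ℝ)
    (hx₁ : ContDiffOn ℝ (⊤ : ℕ∞) x₁ J) (hx₂ : ContDiffOn ℝ (⊤ : ℕ∞) x₂ J) (hr : ContDiffOn ℝ (⊤ : ℕ∞) r J)
    (hunit : ∀ u ∈ J, (deriv x₁ u) ^ 2 + (deriv x₂ u) ^ 2 + (deriv r u) ^ 2 = 1)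
    (hrpos : ∀ u ∈ J, 0 < r u)
    (κ : ℝ → ℝ)
    (hκ : ∀ u, κ u = Real.sqrt ((deriv (deriv x₁) u) ^ 2 + (deriv (deriv x₂) u) ^ 2
      + (deriv (deriv r) u) ^ 2))
    (hκpos : ∀ u ∈ J, 0 < κ u)
    (z : ℝ → ℝ → EuclideanSpace ℝ (Fin 4))
    (hz : ∀ u v, z u v = ![x₁ u, x₂ u, r u * Real.cos v, r u * Real.sin v])
    (e₁ e₂ : ℝ → ℝ → EuclideanSpace ℝ (Fin 4))
    (he₁ : ∀ u v, e₁ u v = (κ u)⁻¹ •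
      (WithLp.toLp 2 ![deriv (deriv x₁) u, deriv (deriv x₂) u,
         deriv (deriv r) u * Real.cos v, deriv (deriv r) u * Real.sin v] :
        EuclideanSpace ℝ (Fin 4)))
    (he₂ : ∀ u v, e₂ u v = (κ u)⁻¹ •
      (WithLp.toLp 2 ![deriv x₂ u * deriv (deriv r) u - deriv (deriv x₂) u * deriv r u,
         deriv (deriv x₁) u * deriv r u - deriv x₁ u * deriv (deriv r) u,
         (deriv x₁ u * deriv (deriv x₂) u - deriv (deriv x₁) u * deriv x₂ u) * Real.cos v,
         (deriv x₁ u * deriv (deriv x₂) u - deriv (deriv x₁) u * deriv x₂ u) * Real.sin v] :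
        EuclideanSpace ℝ (Fin 4)))
    (u v : ℝ) (hu : u ∈ J)
    (zu zv zuu zuv zvv : EuclideanSpace ℝ (Fin 4))
    (hzu : zu = deriv (fun t => z t v) u)
    (hzv : zv = deriv (fun s => z u s) v)
    (hzuu : zuu = deriv (fun t => deriv (fun t' => z t' v) t) u)
    (hzuv : zuv = deriv (fun s => deriv (fun t => z t s) u) v)
    (hzvv : zvv = deriv (fun s => deriv (fun s' => z u s') s) v)
    (E F G W : ℝ)
    (hE : E = ⟪zu, zu⟫) (hF : F = ⟪zu, zv⟫) (hG : G = ⟪zv, zv⟫)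
    (hW : W = Real.sqrt (E * G - F ^ 2))
    (c₁₁ c₁₂ c₂₂ : Fin 2 → ℝ)
    (hc₁₁ : c₁₁ = ![⟪zuu, e₁ u v⟫, ⟪zuu, e₂ u v⟫])
    (hc₁₂ : c₁₂ = ![⟪zuv, e₁ u v⟫, ⟪zuv, e₂ u v⟫])
    (hc₂₂ : c₂₂ = ![⟪zvv, e₁ u v⟫, ⟪zvv, e₂ u v⟫])
    (Δ₁ Δ₂ Δ₃ L M N : ℝ)
    (hΔ₁ : Δ₁ = det2 c₁₁ c₁₂) (hΔ₂ : Δ₂ = det2 c₁₁ c₂₂) (hΔ₃ : Δ₃ = det2 c₁₂ c₂₂)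
    (hL : L = 2 * Δ₁ / W) (hM : M = Δ₂ / W) (hN : N = 2 * Δ₃ / W) :
    ⟪e₁ u v, e₁ u v⟫ = 1 ∧ ⟪e₂ u v, e₂ u v⟫ = 1 ∧ ⟪e₁ u v, e₂ u v⟫ = 0 ∧
    ⟪zu, e₁ u v⟫ = 0 ∧ ⟪zv, e₁ u v⟫ = 0 ∧ ⟪zu, e₂ u v⟫ = 0 ∧ ⟪zv, e₂ u v⟫ = 0 ∧
    L = 0 ∧
    M = -(deriv x₁ u * deriv (deriv x₂) u - deriv (deriv x₁) u * deriv x₂ u) ∧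
    N = 0 ∧
    (E * N + G * L - 2 * F * M) / (2 * (E * G - F ^ 2)) = 0 := by
  have hJu : J ∈ nhds u := hJopen.mem_nhds hu
  have hx₁d : ContDiffOn ℝ (⊤ : ℕ∞) (deriv x₁) J := hx₁.deriv_of_isOpen hJopen (by simp)
  have hx₂d : ContDiffOn ℝ (⊤ : ℕ∞) (deriv x₂) J := hx₂.deriv_of_isOpen hJopen (by simp)
  have hrd : ContDiffOn ℝ (⊤ : ℕ∞) (deriv r) J := hr.deriv_of_isOpen hJopen (by simp)
  have Hx₁ : ∀ t ∈ J, HasDerivAt x₁ (deriv x₁ t) t := fun t ht =>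
    ((hx₁.contDiffAt (hJopen.mem_nhds ht)).differentiableAt (by simp)).hasDerivAt
  have Hx₂ : ∀ t ∈ J, HasDerivAt x₂ (deriv x₂ t) t := fun t ht =>
    ((hx₂.contDiffAt (hJopen.mem_nhds ht)).differentiableAt (by simp)).hasDerivAt
  have Hr : ∀ t ∈ J, HasDerivAt r (deriv r t) t := fun t ht =>
    ((hr.contDiffAt (hJopen.mem_nhds ht)).differentiableAt (by simp)).hasDerivAt
  have Hx₁' : ∀ t ∈ J, HasDerivAt (deriv x₁) (deriv (deriv x₁) t) t := fun t ht =>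
    ((hx₁d.contDiffAt (hJopen.mem_nhds ht)).differentiableAt (by simp)).hasDerivAt
  have Hx₂' : ∀ t ∈ J, HasDerivAt (deriv x₂) (deriv (deriv x₂) t) t := fun t ht =>
    ((hx₂d.contDiffAt (hJopen.mem_nhds ht)).differentiableAt (by simp)).hasDerivAt
  have Hr' : ∀ t ∈ J, HasDerivAt (deriv r) (deriv (deriv r) t) t := fun t ht =>
    ((hrd.contDiffAt (hJopen.mem_nhds ht)).differentiableAt (by simp)).hasDerivAt
  have hz1 : ∀ w, (fun t => z t w)
      = fun t => (WithLp.toLp 2 ![x₁ t, x₂ t, r t * Real.cos w, r t * Real.sin w] :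
        EuclideanSpace ℝ (Fin 4)) := fun w => funext fun t =>
      (WithLp.toLp_ofLp 2 _).symm.trans (congrArg (WithLp.toLp 2) (hz t w))
  have hDt : ∀ w, ∀ t ∈ J, deriv (fun t' => z t' w) t
      = (WithLp.toLp 2 ![deriv x₁ t, deriv x₂ t, deriv r t * Real.cos w, deriv r t * Real.sin w] :
        EuclideanSpace ℝ (Fin 4)) := by
    intro w t ht
    rw [hz1 w]
    exact (hasDerivAt_E4 (Hx₁ t ht) (Hx₂ t ht) ((Hr t ht).mul_const _)
      ((Hr t ht).mul_const _)).deriv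
  have hzu' : zu = (WithLp.toLp 2 ![deriv x₁ u, deriv x₂ u, deriv r u * Real.cos v,
      deriv r u * Real.sin v] : EuclideanSpace ℝ (Fin 4)) := hzu.trans (hDt v u hu)
  have hDs : ∀ w, deriv (fun s => z u s) w
      = (WithLp.toLp 2 ![0, 0, r u * -Real.sin w, r u * Real.cos w] : EuclideanSpace ℝ (Fin 4)) := by
    intro w
    have h : (fun s => z u s)
        = fun s => (WithLp.toLp 2 ![x₁ u, x₂ u, r u * Real.cos s, r u * Real.sin s] :
          EuclideanSpace ℝ (Fin 4)) := funext fun s =>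
          (WithLp.toLp_ofLp 2 _).symm.trans (congrArg (WithLp.toLp 2) (hz u s))
    rw [h]
    exact (hasDerivAt_E4 (hasDerivAt_const _ _) (hasDerivAt_const _ _)
      ((Real.hasDerivAt_cos w).const_mul (r u))
      ((Real.hasDerivAt_sin w).const_mul (r u))).deriv
  have hzv' : zv = (WithLp.toLp 2 ![0, 0, r u * -Real.sin v, r u * Real.cos v] :
      EuclideanSpace ℝ (Fin 4)) := hzv.trans (hDs v)
  have hzuu' : zuu = (WithLp.toLp 2 ![deriv (deriv x₁) u, deriv (deriv x₂) u,
      deriv (deriv r) u * Real.cos v, deriv (deriv r) u * Real.sin v] :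
      EuclideanSpace ℝ (Fin 4)) := by
    rw [hzuu]
    have hev : (fun t => deriv (fun t' => z t' v) t) =ᶠ[nhds u]
        (fun t => (WithLp.toLp 2 ![deriv x₁ t, deriv x₂ t, deriv r t * Real.cos v,
          deriv r t * Real.sin v] : EuclideanSpace ℝ (Fin 4))) :=
      Filter.eventuallyEq_of_mem hJu (fun t ht => hDt v t ht)
    rw [hev.deriv_eq]
    exact (hasDerivAt_E4 (Hx₁' u hu) (Hx₂' u hu) ((Hr' u hu).mul_const _)
      ((Hr' u hu).mul_const _)).deriv
  have hzuv' : zuv = (WithLp.toLp 2 ![0, 0, deriv r u * -Real.sin v, deriv r u * Real.cos v] :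
      EuclideanSpace ℝ (Fin 4)) := by
    rw [hzuv]
    have h : (fun s => deriv (fun t => z t s) u)
        = fun s => (WithLp.toLp 2 ![deriv x₁ u, deriv x₂ u, deriv r u * Real.cos s,
          deriv r u * Real.sin s] : EuclideanSpace ℝ (Fin 4)) :=
      funext fun s => hDt s u hu
    rw [h]
    exact (hasDerivAt_E4 (hasDerivAt_const _ _) (hasDerivAt_const _ _)
      ((Real.hasDerivAt_cos v).const_mul _) ((Real.hasDerivAt_sin v).const_mul _)).deriv
  have hzvv' : zvv = (WithLp.toLp 2 ![0, 0, r u * -Real.cos v, r u * -Real.sin v] :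
      EuclideanSpace ℝ (Fin 4)) := by
    rw [hzvv]
    have h : (fun s => deriv (fun s' => z u s') s)
        = fun s => (WithLp.toLp 2 ![0, 0, r u * -Real.sin s, r u * Real.cos s] :
          EuclideanSpace ℝ (Fin 4)) := funext hDs
    rw [h]
    exact (hasDerivAt_E4 (hasDerivAt_const _ _) (hasDerivAt_const _ _)
      ((Real.hasDerivAt_sin v).neg.const_mul (r u))
      ((Real.hasDerivAt_cos v).const_mul (r u))).deriv
  -- scalar abbreviations
  set a1 := deriv x₁ u with ha1
  set a2 := deriv x₂ u with ha2
  set a3 := deriv r u with ha3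
  set b1 := deriv (deriv x₁) u with hb1
  set b2 := deriv (deriv x₂) u with hb2
  set b3 := deriv (deriv r) u with hb3
  have hu1 : a1 ^ 2 + a2 ^ 2 + a3 ^ 2 = 1 := hunit u hu
  have hκsq : κ u ^ 2 = b1 ^ 2 + b2 ^ 2 + b3 ^ 2 := by
    rw [hκ]; exact Real.sq_sqrt (by positivity)
  have hκne : κ u ≠ 0 := (hκpos u hu).ne'
  have hk2 : (κ u)⁻¹ * κ u = 1 := inv_mul_cancel₀ hκne
  have hrne : r u ≠ 0 := (hrpos u hu).ne'
  have hsc : Real.sin v ^ 2 + Real.cos v ^ 2 = 1 := Real.sin_sq_add_cos_sq v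
  have horth : a1 * b1 + a2 * b2 + a3 * b3 = 0 := by
    have hgd : HasDerivAt (fun t => (deriv x₁ t) ^ 2 + (deriv x₂ t) ^ 2 + (deriv r t) ^ 2)
        (2 * a1 ^ 1 * b1 + 2 * a2 ^ 1 * b2 + 2 * a3 ^ 1 * b3) u :=
      (((Hx₁' u hu).pow 2).add ((Hx₂' u hu).pow 2)).add ((Hr' u hu).pow 2)
    have hconst : (fun t => (deriv x₁ t) ^ 2 + (deriv x₂ t) ^ 2 + (deriv r t) ^ 2)
        =ᶠ[nhds u] fun _ => (1 : ℝ) := Filter.eventuallyEq_of_mem hJu hunit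
    have h0 : deriv (fun t => (deriv x₁ t) ^ 2 + (deriv x₂ t) ^ 2 + (deriv r t) ^ 2) u = 0 := by
      rw [hconst.deriv_eq]; simp
    have h1 := hgd.deriv
    rw [h0] at h1
    simp only [pow_one] at h1
    linarith
  -- inner products with e₁, e₂
  have hE1 : E = 1 := by
    rw [hE, hzu']
    simp only [PiLp.inner_apply, RCLike.inner_apply, conj_trivial, Fin.sum_univ_four, PiLp.smul_apply, PiLp.toLp_apply, Pi.smul_apply, smul_eq_mul,
      Matrix.cons_val_zero, Matrix.cons_val_one, Matrix.head_cons, Matrix.cons_val_two,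
      Matrix.tail_cons, Matrix.cons_val_three]
    clear! z e₁ e₂ zu zv zuu zuv zvv c₁₁ c₁₂ c₂₂
    try simp only [← ha1, ← ha2, ← ha3, ← hb1, ← hb2, ← hb3]
    linear_combination a3 ^ 2 * hsc + hu1
  have hF0 : F = 0 := by
    rw [hF, hzu', hzv']
    simp only [PiLp.inner_apply, RCLike.inner_apply, conj_trivial, Fin.sum_univ_four, PiLp.smul_apply, PiLp.toLp_apply, Pi.smul_apply, smul_eq_mul,
      Matrix.cons_val_zero, Matrix.cons_val_one, Matrix.head_cons, Matrix.cons_val_two,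
      Matrix.tail_cons, Matrix.cons_val_three]
    clear! z e₁ e₂ zu zv zuu zuv zvv c₁₁ c₁₂ c₂₂
    ring
  have hG' : G = r u ^ 2 := by
    rw [hG, hzv']
    simp only [PiLp.inner_apply, RCLike.inner_apply, conj_trivial, Fin.sum_univ_four, PiLp.smul_apply, PiLp.toLp_apply, Pi.smul_apply, smul_eq_mul,
      Matrix.cons_val_zero, Matrix.cons_val_one, Matrix.head_cons, Matrix.cons_val_two,
      Matrix.tail_cons, Matrix.cons_val_three]
    clear! z e₁ e₂ zu zv zuu zuv zvv c₁₁ c₁₂ c₂₂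
    try simp only [← ha1, ← ha2, ← ha3, ← hb1, ← hb2, ← hb3]
    linear_combination (r u) ^ 2 * hsc
  have hW' : W = r u := by
    rw [hW, hE1, hF0, hG']
    rw [show (1 : ℝ) * r u ^ 2 - 0 ^ 2 = r u ^ 2 by ring]
    exact Real.sqrt_sq (hrpos u hu).le
  have he₁e₁ : ⟪e₁ u v, e₁ u v⟫ = 1 := by
    rw [he₁]
    simp only [real_inner_smul_left, real_inner_smul_right, PiLp.inner_apply,
      RCLike.inner_apply, conj_trivial, Fin.sum_univ_four, PiLp.smul_apply, PiLp.toLp_apply, Pi.smul_apply, smul_eq_mul,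
      Matrix.cons_val_zero, Matrix.cons_val_one, Matrix.head_cons, Matrix.cons_val_two,
      Matrix.tail_cons, Matrix.cons_val_three]
    clear! z e₁ e₂ zu zv zuu zuv zvv c₁₁ c₁₂ c₂₂
    try simp only [← ha1, ← ha2, ← ha3, ← hb1, ← hb2, ← hb3]
    linear_combination ((κ u)⁻¹) ^ 2 * b3 ^ 2 * hsc - ((κ u)⁻¹) ^ 2 * hκsq
      + ((κ u)⁻¹ * κ u + 1) * hk2
  have he₂e₂ : ⟪e₂ u v, e₂ u v⟫ = 1 := by
    rw [he₂]
    simp only [real_inner_smul_left, real_inner_smul_right, PiLp.inner_apply,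
      RCLike.inner_apply, conj_trivial, Fin.sum_univ_four, PiLp.smul_apply, PiLp.toLp_apply, Pi.smul_apply, smul_eq_mul,
      Matrix.cons_val_zero, Matrix.cons_val_one, Matrix.head_cons, Matrix.cons_val_two,
      Matrix.tail_cons, Matrix.cons_val_three]
    clear! z e₁ e₂ zu zv zuu zuv zvv c₁₁ c₁₂ c₂₂
    try simp only [← ha1, ← ha2, ← ha3, ← hb1, ← hb2, ← hb3]
    linear_combination ((κ u)⁻¹) ^ 2 * (a1 * b2 - b1 * a2) ^ 2 * hsc
      + ((κ u)⁻¹) ^ 2 * (b1 ^ 2 + b2 ^ 2 + b3 ^ 2) * hu1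
      - ((κ u)⁻¹) ^ 2 * (a1 * b1 + a2 * b2 + a3 * b3) * horth
      - ((κ u)⁻¹) ^ 2 * hκsq + ((κ u)⁻¹ * κ u + 1) * hk2
  have he₁e₂ : ⟪e₁ u v, e₂ u v⟫ = 0 := by
    rw [he₁, he₂]
    simp only [real_inner_smul_left, real_inner_smul_right, PiLp.inner_apply,
      RCLike.inner_apply, conj_trivial, Fin.sum_univ_four, PiLp.smul_apply, PiLp.toLp_apply, Pi.smul_apply, smul_eq_mul,
      Matrix.cons_val_zero, Matrix.cons_val_one, Matrix.head_cons, Matrix.cons_val_two,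
      Matrix.tail_cons, Matrix.cons_val_three]
    clear! z e₁ e₂ zu zv zuu zuv zvv c₁₁ c₁₂ c₂₂
    try simp only [← ha1, ← ha2, ← ha3, ← hb1, ← hb2, ← hb3]
    linear_combination ((κ u)⁻¹) ^ 2 * b3 * (a1 * b2 - b1 * a2) * hsc
  have hzue₁ : ⟪zu, e₁ u v⟫ = 0 := by
    rw [hzu', he₁]
    simp only [real_inner_smul_left, real_inner_smul_right, PiLp.inner_apply,
      RCLike.inner_apply, conj_trivial, Fin.sum_univ_four, PiLp.smul_apply, PiLp.toLp_apply, Pi.smul_apply, smul_eq_mul,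
      Matrix.cons_val_zero, Matrix.cons_val_one, Matrix.head_cons, Matrix.cons_val_two,
      Matrix.tail_cons, Matrix.cons_val_three]
    clear! z e₁ e₂ zu zv zuu zuv zvv c₁₁ c₁₂ c₂₂
    try simp only [← ha1, ← ha2, ← ha3, ← hb1, ← hb2, ← hb3]
    linear_combination (κ u)⁻¹ * a3 * b3 * hsc + (κ u)⁻¹ * horth
  have hzve₁ : ⟪zv, e₁ u v⟫ = 0 := by
    rw [hzv', he₁]
    simp only [real_inner_smul_left, real_inner_smul_right, PiLp.inner_apply,
      RCLike.inner_apply, conj_trivial, Fin.sum_univ_four, PiLp.smul_apply, PiLp.toLp_apply, Pi.smul_apply, smul_eq_mul,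
      Matrix.cons_val_zero, Matrix.cons_val_one, Matrix.head_cons, Matrix.cons_val_two,
      Matrix.tail_cons, Matrix.cons_val_three]
    clear! z e₁ e₂ zu zv zuu zuv zvv c₁₁ c₁₂ c₂₂
    ring
  have hzue₂ : ⟪zu, e₂ u v⟫ = 0 := by
    rw [hzu', he₂]
    simp only [real_inner_smul_left, real_inner_smul_right, PiLp.inner_apply,
      RCLike.inner_apply, conj_trivial, Fin.sum_univ_four, PiLp.smul_apply, PiLp.toLp_apply, Pi.smul_apply, smul_eq_mul,
      Matrix.cons_val_zero, Matrix.cons_val_one, Matrix.head_cons, Matrix.cons_val_two,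
      Matrix.tail_cons, Matrix.cons_val_three]
    clear! z e₁ e₂ zu zv zuu zuv zvv c₁₁ c₁₂ c₂₂
    try simp only [← ha1, ← ha2, ← ha3, ← hb1, ← hb2, ← hb3]
    linear_combination (κ u)⁻¹ * a3 * (a1 * b2 - b1 * a2) * hsc
  have hzve₂ : ⟪zv, e₂ u v⟫ = 0 := by
    rw [hzv', he₂]
    simp only [real_inner_smul_left, real_inner_smul_right, PiLp.inner_apply,
      RCLike.inner_apply, conj_trivial, Fin.sum_univ_four, PiLp.smul_apply, PiLp.toLp_apply, Pi.smul_apply, smul_eq_mul,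
      Matrix.cons_val_zero, Matrix.cons_val_one, Matrix.head_cons, Matrix.cons_val_two,
      Matrix.tail_cons, Matrix.cons_val_three]
    clear! z e₁ e₂ zu zv zuu zuv zvv c₁₁ c₁₂ c₂₂
    ring
  -- c entries
  have hc110 : c₁₁ 0 = κ u := by
    rw [hc₁₁]
    simp only [Matrix.cons_val_zero]
    rw [hzuu', he₁]
    simp only [real_inner_smul_left, real_inner_smul_right, PiLp.inner_apply,
      RCLike.inner_apply, conj_trivial, Fin.sum_univ_four, PiLp.smul_apply, PiLp.toLp_apply, Pi.smul_apply, smul_eq_mul,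
      Matrix.cons_val_zero, Matrix.cons_val_one, Matrix.head_cons, Matrix.cons_val_two,
      Matrix.tail_cons, Matrix.cons_val_three]
    clear! z e₁ e₂ zu zv zuu zuv zvv c₁₁ c₁₂ c₂₂
    try simp only [← ha1, ← ha2, ← ha3, ← hb1, ← hb2, ← hb3]
    linear_combination (κ u)⁻¹ * b3 ^ 2 * hsc - (κ u)⁻¹ * hκsq + κ u * hk2
  have hc111 : c₁₁ 1 = 0 := by
    rw [hc₁₁]
    simp only [Matrix.cons_val_one, Matrix.head_cons]
    rw [hzuu', he₂]
    simp only [real_inner_smul_left, real_inner_smul_right, PiLp.inner_apply,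
      RCLike.inner_apply, conj_trivial, Fin.sum_univ_four, PiLp.smul_apply, PiLp.toLp_apply, Pi.smul_apply, smul_eq_mul,
      Matrix.cons_val_zero, Matrix.cons_val_one, Matrix.head_cons, Matrix.cons_val_two,
      Matrix.tail_cons, Matrix.cons_val_three]
    clear! z e₁ e₂ zu zv zuu zuv zvv c₁₁ c₁₂ c₂₂
    try simp only [← ha1, ← ha2, ← ha3, ← hb1, ← hb2, ← hb3]
    linear_combination (κ u)⁻¹ * b3 * (a1 * b2 - b1 * a2) * hsc
  have hc120 : c₁₂ 0 = 0 := by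
    rw [hc₁₂]
    simp only [Matrix.cons_val_zero]
    rw [hzuv', he₁]
    simp only [real_inner_smul_left, real_inner_smul_right, PiLp.inner_apply,
      RCLike.inner_apply, conj_trivial, Fin.sum_univ_four, PiLp.smul_apply, PiLp.toLp_apply, Pi.smul_apply, smul_eq_mul,
      Matrix.cons_val_zero, Matrix.cons_val_one, Matrix.head_cons, Matrix.cons_val_two,
      Matrix.tail_cons, Matrix.cons_val_three]
    clear! z e₁ e₂ zu zv zuu zuv zvv c₁₁ c₁₂ c₂₂
    ring
  have hc121 : c₁₂ 1 = 0 := by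
    rw [hc₁₂]
    simp only [Matrix.cons_val_one, Matrix.head_cons]
    rw [hzuv', he₂]
    simp only [real_inner_smul_left, real_inner_smul_right, PiLp.inner_apply,
      RCLike.inner_apply, conj_trivial, Fin.sum_univ_four, PiLp.smul_apply, PiLp.toLp_apply, Pi.smul_apply, smul_eq_mul,
      Matrix.cons_val_zero, Matrix.cons_val_one, Matrix.head_cons, Matrix.cons_val_two,
      Matrix.tail_cons, Matrix.cons_val_three]
    clear! z e₁ e₂ zu zv zuu zuv zvv c₁₁ c₁₂ c₂₂
    ring
  have hc221 : c₂₂ 1 = (κ u)⁻¹ * (-(r u) * (a1 * b2 - b1 * a2)) := by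
    rw [hc₂₂]
    simp only [Matrix.cons_val_one, Matrix.head_cons]
    rw [hzvv', he₂]
    simp only [real_inner_smul_left, real_inner_smul_right, PiLp.inner_apply,
      RCLike.inner_apply, conj_trivial, Fin.sum_univ_four, PiLp.smul_apply, PiLp.toLp_apply, Pi.smul_apply, smul_eq_mul,
      Matrix.cons_val_zero, Matrix.cons_val_one, Matrix.head_cons, Matrix.cons_val_two,
      Matrix.tail_cons, Matrix.cons_val_three]
    clear! z e₁ e₂ zu zv zuu zuv zvv c₁₁ c₁₂ c₂₂
    try simp only [← ha1, ← ha2, ← ha3, ← hb1, ← hb2, ← hb3]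
    linear_combination -(r u) * (κ u)⁻¹ * (a1 * b2 - b1 * a2) * hsc
  have hΔ₁0 : Δ₁ = 0 := by rw [hΔ₁]; unfold det2; rw [hc120, hc121]; ring
  have hΔ₃0 : Δ₃ = 0 := by rw [hΔ₃]; unfold det2; rw [hc120, hc121]; ring
  have hL0 : L = 0 := by rw [hL, hΔ₁0]; simp
  have hN0 : N = 0 := by rw [hN, hΔ₃0]; simp
  have hM' : M = -(a1 * b2 - b1 * a2) := by
    rw [hM, hΔ₂]
    unfold det2
    rw [hc110, hc111, hc221, hW']
    field_simp
    ring
  refine ⟨he₁e₁, he₂e₂, he₁e₂, hzue₁, hzve₁, hzue₂, hzve₂, hL0, hM', hN0, ?_⟩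
  rw [hL0, hN0, hF0]
  simp
end

section
/- Let J ⊆ ℝ be an open interval and x₁, x₂, r : J → ℝ smooth functions with x₁'² + x₂'² + r'² = 1, r > 0, and κ := √(x₁''² + x₂''² + r''²) > 0 on J. For the rotational surface z(u,v) = (x₁(u), x₂(u), r(u)·cos v, r(u)·sin v) with normal frame e₁ = (1/κ)·(x₁'', x₂'', r''·cos v, r''·sin v), e₂ = (1/κ)·(x₂'r'' − x₂''r', x₁''r' − x₁'r'', (x₁'x₂'' − x₁''x₂')·cos v, (x₁'x₂'' − x₁''x₂')·sin v), the invariant k = (LN − M²)/(EG − F²) satisfies k = −(x₁'x₂'' − x₁''x₂')²/r² at every point. -/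
open scoped RealInnerProductSpace

private lemma hasDerivAt_E4_s15 (f₁ f₂ f₃ f₄ : ℝ → ℝ) (a₁ a₂ a₃ a₄ : ℝ) {t : ℝ}
    (f : ℝ → EuclideanSpace ℝ (Fin 4)) (hf : ∀ s, f s = ![f₁ s, f₂ s, f₃ s, f₄ s])
    (a : EuclideanSpace ℝ (Fin 4)) (ha : a = WithLp.toLp 2 ![a₁, a₂, a₃, a₄])
    (h₁ : HasDerivAt f₁ a₁ t) (h₂ : HasDerivAt f₂ a₂ t)
    (h₃ : HasDerivAt f₃ a₃ t) (h₄ : HasDerivAt f₄ a₄ t) :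
    HasDerivAt f a t := by
  have hg : HasDerivAt (fun s => (![f₁ s, f₂ s, f₃ s, f₄ s] : Fin 4 → ℝ))
      ![a₁, a₂, a₃, a₄] t := by
    apply hasDerivAt_pi.2
    intro i
    fin_cases i <;> simpa
  have hcomp := (EuclideanSpace.equiv (Fin 4) ℝ).symm.toContinuousLinearMap.hasFDerivAt.comp_hasDerivAt t hg
  have heq : f = ⇑(EuclideanSpace.equiv (Fin 4) ℝ).symm.toContinuousLinearMap ∘
      (fun s => (![f₁ s, f₂ s, f₃ s, f₄ s] : Fin 4 → ℝ)) := by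
    funext s; rw [Function.comp_apply, ← hf s]; rfl
  rw [heq, ha]
  exact hcomp

private lemma inner_E4 {x y : EuclideanSpace ℝ (Fin 4)} (a b c d a' b' c' d' : ℝ)
    (hx : x = WithLp.toLp 2 ![a, b, c, d]) (hy : y = WithLp.toLp 2 ![a', b', c', d']) :
    ⟪x, y⟫ = a * a' + b * b' + c * c' + d * d' := by
  subst hx hy
  simp [PiLp.inner_apply, Fin.sum_univ_four, RCLike.inner_apply]
  ring

/-- For the rotational surface `z(u,v) = (x₁(u), x₂(u), r(u)·cos v, r(u)·sin v)` in `𝔼⁴`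
generated by a unit-speed curve with `r > 0` and curvature `κ > 0`, the fields `e₁, e₂`
form an orthonormal frame of the normal space and the invariant
`k = (LN - M²)/(EG - F²)` satisfies `k = -(x₁'x₂'' - x₁''x₂')²/r²` at every point. -/
theorem rotational_surface_k_invariant
    (J : Set ℝ) (hJopen : IsOpen J) (hJconn : J.OrdConnected)
    (x₁ x₂ r : ℝ → ℝ)
    (hx₁ : ContDiffOn ℝ (⊤ : ℕ∞) x₁ J) (hx₂ : ContDiffOn ℝ (⊤ : ℕ∞) x₂ J) (hr : ContDiffOn ℝ (⊤ : ℕ∞) r J)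
    (hunit : ∀ u ∈ J, (deriv x₁ u) ^ 2 + (deriv x₂ u) ^ 2 + (deriv r u) ^ 2 = 1)
    (hrpos : ∀ u ∈ J, 0 < r u)
    (κ : ℝ → ℝ)
    (hκ : ∀ u, κ u = Real.sqrt ((deriv (deriv x₁) u) ^ 2 + (deriv (deriv x₂) u) ^ 2
      + (deriv (deriv r) u) ^ 2))
    (hκpos : ∀ u ∈ J, 0 < κ u)
    (z : ℝ → ℝ → EuclideanSpace ℝ (Fin 4))
    (hz : ∀ u v, z u v = ![x₁ u, x₂ u, r u * Real.cos v, r u * Real.sin v])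
    (e₁ e₂ : ℝ → ℝ → EuclideanSpace ℝ (Fin 4))
    (he₁ : ∀ u v, e₁ u v = (κ u)⁻¹ •
      (WithLp.toLp 2 ![deriv (deriv x₁) u, deriv (deriv x₂) u,
         deriv (deriv r) u * Real.cos v, deriv (deriv r) u * Real.sin v] :
        EuclideanSpace ℝ (Fin 4)))
    (he₂ : ∀ u v, e₂ u v = (κ u)⁻¹ •
      (WithLp.toLp 2 ![deriv x₂ u * deriv (deriv r) u - deriv (deriv x₂) u * deriv r u,
         deriv (deriv x₁) u * deriv r u - deriv x₁ u * deriv (deriv r) u,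
         (deriv x₁ u * deriv (deriv x₂) u - deriv (deriv x₁) u * deriv x₂ u) * Real.cos v,
         (deriv x₁ u * deriv (deriv x₂) u - deriv (deriv x₁) u * deriv x₂ u) * Real.sin v] :
        EuclideanSpace ℝ (Fin 4)))
    (u v : ℝ) (hu : u ∈ J)
    (zu zv zuu zuv zvv : EuclideanSpace ℝ (Fin 4))
    (hzu : zu = deriv (fun t => z t v) u)
    (hzv : zv = deriv (fun s => z u s) v)
    (hzuu : zuu = deriv (fun t => deriv (fun t' => z t' v) t) u)
    (hzuv : zuv = deriv (fun s => deriv (fun t => z t s) u) v)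
    (hzvv : zvv = deriv (fun s => deriv (fun s' => z u s') s) v)
    (E F G W : ℝ)
    (hE : E = ⟪zu, zu⟫) (hF : F = ⟪zu, zv⟫) (hG : G = ⟪zv, zv⟫)
    (hW : W = Real.sqrt (E * G - F ^ 2))
    (c₁₁ c₁₂ c₂₂ : Fin 2 → ℝ)
    (hc₁₁ : c₁₁ = ![⟪zuu, e₁ u v⟫, ⟪zuu, e₂ u v⟫])
    (hc₁₂ : c₁₂ = ![⟪zuv, e₁ u v⟫, ⟪zuv, e₂ u v⟫])
    (hc₂₂ : c₂₂ = ![⟪zvv, e₁ u v⟫, ⟪zvv, e₂ u v⟫])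
    (Δ₁ Δ₂ Δ₃ L M N : ℝ)
    (hΔ₁ : Δ₁ = det2 c₁₁ c₁₂) (hΔ₂ : Δ₂ = det2 c₁₁ c₂₂) (hΔ₃ : Δ₃ = det2 c₁₂ c₂₂)
    (hL : L = 2 * Δ₁ / W) (hM : M = Δ₂ / W) (hN : N = 2 * Δ₃ / W) :
    (L * N - M ^ 2) / (E * G - F ^ 2)
      = -(deriv x₁ u * deriv (deriv x₂) u - deriv (deriv x₁) u * deriv x₂ u) ^ 2
        / (r u) ^ 2 := by
  have hmem : J ∈ nhds u := hJopen.mem_nhds hu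
  have hd : ∀ (f : ℝ → ℝ), ContDiffOn ℝ (⊤ : ℕ∞) f J → ∀ t ∈ J, HasDerivAt f (deriv f t) t :=
    fun f hf t ht =>
      ((hf.contDiffAt (hJopen.mem_nhds ht)).differentiableAt (by simp)).hasDerivAt
  have hd1 := hd x₁ hx₁
  have hd2 := hd x₂ hx₂
  have hd3 := hd r hr
  have hd1' := hd _ (hx₁.deriv_of_isOpen hJopen (by simp))
  have hd2' := hd _ (hx₂.deriv_of_isOpen hJopen (by simp))
  have hd3' := hd _ (hr.deriv_of_isOpen hJopen (by simp))
  -- derivative in the u-direction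
  have hu_fun : ∀ (s : ℝ), ∀ t ∈ J, HasDerivAt (fun t' => z t' s)
      ((WithLp.toLp 2 ![deriv x₁ t, deriv x₂ t, deriv r t * Real.cos s, deriv r t * Real.sin s] :
        EuclideanSpace ℝ (Fin 4))) t := by
    intro s t ht
    exact hasDerivAt_E4_s15 x₁ x₂ (fun t' => r t' * Real.cos s) (fun t' => r t' * Real.sin s)
      _ _ _ _ _ (fun t' => hz t' s) _ rfl (hd1 t ht) (hd2 t ht)
      ((hd3 t ht).mul_const _) ((hd3 t ht).mul_const _)
  have hzu' : zu = (WithLp.toLp 2 ![deriv x₁ u, deriv x₂ u, deriv r u * Real.cos v,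
      deriv r u * Real.sin v] : EuclideanSpace ℝ (Fin 4)) := by
    rw [hzu]; exact (hu_fun v u hu).deriv
  -- derivative in the v-direction
  have hv_fun : ∀ (s : ℝ), HasDerivAt (fun s' => z u s')
      ((WithLp.toLp 2 ![0, 0, r u * -Real.sin s, r u * Real.cos s] : EuclideanSpace ℝ (Fin 4))) s := by
    intro s
    exact hasDerivAt_E4_s15 (fun _ => x₁ u) (fun _ => x₂ u) (fun s' => r u * Real.cos s')
      (fun s' => r u * Real.sin s') _ _ _ _ _ (fun s' => hz u s') _ rfl
      (hasDerivAt_const _ _) (hasDerivAt_const _ _)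
      ((Real.hasDerivAt_cos s).const_mul (r u)) ((Real.hasDerivAt_sin s).const_mul (r u))
  have hzv' : zv = (WithLp.toLp 2 ![0, 0, r u * -Real.sin v, r u * Real.cos v] :
      EuclideanSpace ℝ (Fin 4)) := by
    rw [hzv]; exact (hv_fun v).deriv
  -- second derivative zuu
  have hzuu' : zuu = (WithLp.toLp 2 ![deriv (deriv x₁) u, deriv (deriv x₂) u,
      deriv (deriv r) u * Real.cos v, deriv (deriv r) u * Real.sin v] :
      EuclideanSpace ℝ (Fin 4)) := by
    have heq : (fun t => deriv (fun t' => z t' v) t)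
        =ᶠ[nhds u] (fun t => (WithLp.toLp 2 ![deriv x₁ t, deriv x₂ t, deriv r t * Real.cos v,
          deriv r t * Real.sin v] : EuclideanSpace ℝ (Fin 4))) :=
      Filter.eventuallyEq_of_mem hmem (fun t ht => (hu_fun v t ht).deriv)
    rw [hzuu, heq.deriv_eq]
    exact (hasDerivAt_E4_s15 (deriv x₁) (deriv x₂) (fun t => deriv r t * Real.cos v)
      (fun t => deriv r t * Real.sin v) _ _ _ _ _ (fun t => rfl) _ rfl
      (hd1' u hu) (hd2' u hu) ((hd3' u hu).mul_const _) ((hd3' u hu).mul_const _)).deriv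
  -- mixed derivative zuv
  have hzuv' : zuv = (WithLp.toLp 2 ![0, 0, deriv r u * -Real.sin v, deriv r u * Real.cos v] :
      EuclideanSpace ℝ (Fin 4)) := by
    have heq : (fun s => deriv (fun t => z t s) u)
        = fun s => (WithLp.toLp 2 ![deriv x₁ u, deriv x₂ u, deriv r u * Real.cos s,
            deriv r u * Real.sin s] : EuclideanSpace ℝ (Fin 4)) :=
      funext fun s => (hu_fun s u hu).deriv
    rw [hzuv, heq]
    exact (hasDerivAt_E4_s15 (fun _ => deriv x₁ u) (fun _ => deriv x₂ u)
      (fun s => deriv r u * Real.cos s) (fun s => deriv r u * Real.sin s)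
      _ _ _ _ _ (fun s => rfl) _ rfl (hasDerivAt_const _ _) (hasDerivAt_const _ _)
      ((Real.hasDerivAt_cos v).const_mul _) ((Real.hasDerivAt_sin v).const_mul _)).deriv
  -- second derivative zvv
  have hzvv' : zvv = (WithLp.toLp 2 ![0, 0, r u * -Real.cos v, r u * -Real.sin v] :
      EuclideanSpace ℝ (Fin 4)) := by
    have heq : (fun s => deriv (fun s' => z u s') s)
        = fun s => (WithLp.toLp 2 ![0, 0, r u * -Real.sin s, r u * Real.cos s] :
            EuclideanSpace ℝ (Fin 4)) :=
      funext fun s => (hv_fun s).deriv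
    rw [hzvv, heq]
    exact (hasDerivAt_E4_s15 (fun _ => (0:ℝ)) (fun _ => (0:ℝ))
      (fun s => r u * -Real.sin s) (fun s => r u * Real.cos s)
      _ _ _ _ _ (fun s => rfl) _ rfl (hasDerivAt_const _ _) (hasDerivAt_const _ _)
      (((Real.hasDerivAt_sin v).neg).const_mul (r u))
      ((Real.hasDerivAt_cos v).const_mul (r u))).deriv
  -- scalar computations
  have hKne : κ u ≠ 0 := (hκpos u hu).ne'
  have hRne : r u ≠ 0 := (hrpos u hu).ne'
  have pyth := Real.cos_sq_add_sin_sq v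
  have hunitu := hunit u hu
  have hK2 : κ u ^ 2 = (deriv (deriv x₁) u) ^ 2 + (deriv (deriv x₂) u) ^ 2
      + (deriv (deriv r) u) ^ 2 := by
    rw [hκ]; exact Real.sq_sqrt (by positivity)
  have hE1 : E = 1 := by
    rw [hE, inner_E4 _ _ _ _ _ _ _ _ hzu' hzu']
    linear_combination hunitu + (deriv r u) ^ 2 * pyth
  have hF0 : F = 0 := by
    rw [hF, inner_E4 _ _ _ _ _ _ _ _ hzu' hzv']; ring
  have hGR : G = r u ^ 2 := by
    rw [hG, inner_E4 _ _ _ _ _ _ _ _ hzv' hzv']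
    linear_combination (r u) ^ 2 * pyth
  have hWR : W = r u := by
    rw [hW, hE1, hGR, hF0, show (1:ℝ) * r u ^ 2 - 0 ^ 2 = r u ^ 2 by ring]
    exact Real.sqrt_sq (hrpos u hu).le
  -- entries of the c-matrices
  have i11 : ⟪zuu, e₁ u v⟫ = κ u := by
    rw [he₁, real_inner_smul_right, inner_E4 _ _ _ _ _ _ _ _ hzuu' rfl]
    have hX : deriv (deriv x₁) u * deriv (deriv x₁) u
        + deriv (deriv x₂) u * deriv (deriv x₂) u
        + deriv (deriv r) u * Real.cos v * (deriv (deriv r) u * Real.cos v)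
        + deriv (deriv r) u * Real.sin v * (deriv (deriv r) u * Real.sin v) = κ u ^ 2 := by
      linear_combination (deriv (deriv r) u) ^ 2 * pyth - hK2
    rw [hX, sq, inv_mul_cancel_left₀ hKne]
  have i12 : ⟪zuu, e₂ u v⟫ = 0 := by
    rw [he₂, real_inner_smul_right, inner_E4 _ _ _ _ _ _ _ _ hzuu' rfl]
    have hX : deriv (deriv x₁) u * (deriv x₂ u * deriv (deriv r) u - deriv (deriv x₂) u * deriv r u)
        + deriv (deriv x₂) u * (deriv (deriv x₁) u * deriv r u - deriv x₁ u * deriv (deriv r) u)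
        + deriv (deriv r) u * Real.cos v *
          ((deriv x₁ u * deriv (deriv x₂) u - deriv (deriv x₁) u * deriv x₂ u) * Real.cos v)
        + deriv (deriv r) u * Real.sin v *
          ((deriv x₁ u * deriv (deriv x₂) u - deriv (deriv x₁) u * deriv x₂ u) * Real.sin v)
        = 0 := by
      linear_combination (deriv (deriv r) u *
        (deriv x₁ u * deriv (deriv x₂) u - deriv (deriv x₁) u * deriv x₂ u)) * pyth
    rw [hX, mul_zero]
  have i21 : ⟪zuv, e₁ u v⟫ = 0 := by
    rw [he₁, real_inner_smul_right, inner_E4 _ _ _ _ _ _ _ _ hzuv' rfl]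
    ring
  have i22 : ⟪zuv, e₂ u v⟫ = 0 := by
    rw [he₂, real_inner_smul_right, inner_E4 _ _ _ _ _ _ _ _ hzuv' rfl]
    ring
  have i32 : ⟪zvv, e₂ u v⟫ = (κ u)⁻¹ *
      (-(r u) * (deriv x₁ u * deriv (deriv x₂) u - deriv (deriv x₁) u * deriv x₂ u)) := by
    rw [he₂, real_inner_smul_right, inner_E4 _ _ _ _ _ _ _ _ hzvv' rfl]
    have hX : (0:ℝ) * (deriv x₂ u * deriv (deriv r) u - deriv (deriv x₂) u * deriv r u)
        + 0 * (deriv (deriv x₁) u * deriv r u - deriv x₁ u * deriv (deriv r) u)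
        + r u * -Real.cos v *
          ((deriv x₁ u * deriv (deriv x₂) u - deriv (deriv x₁) u * deriv x₂ u) * Real.cos v)
        + r u * -Real.sin v *
          ((deriv x₁ u * deriv (deriv x₂) u - deriv (deriv x₁) u * deriv x₂ u) * Real.sin v)
        = -(r u) * (deriv x₁ u * deriv (deriv x₂) u - deriv (deriv x₁) u * deriv x₂ u) := by
      linear_combination (-(r u) *
        (deriv x₁ u * deriv (deriv x₂) u - deriv (deriv x₁) u * deriv x₂ u)) * pyth
    rw [hX]
  -- the determinants
  have hΔ₁0 : Δ₁ = 0 := by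
    rw [hΔ₁, hc₁₁, hc₁₂]
    simp [det2, i21, i22]
  have hΔ₃0 : Δ₃ = 0 := by
    rw [hΔ₃, hc₁₂, hc₂₂]
    simp [det2, i21, i22]
  have hΔ₂v : Δ₂ = -(r u) *
      (deriv x₁ u * deriv (deriv x₂) u - deriv (deriv x₁) u * deriv x₂ u) := by
    rw [hΔ₂, hc₁₁, hc₂₂]
    simp only [det2, Matrix.cons_val_zero, Matrix.cons_val_one, Matrix.head_cons,
      i11, i12, i32, zero_mul, sub_zero]
    rw [mul_inv_cancel_left₀ hKne]
  -- final computation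
  rw [hL, hM, hN, hΔ₁0, hΔ₃0, hΔ₂v, hWR, hE1, hF0, hGR]
  field_simp
  ring
end

section
/- Let J ⊆ ℝ be an open interval and x₁, x₂, r : J → ℝ smooth functions with x₁'² + x₂'² + r'² = 1, r > 0, and κ := √(x₁''² + x₂''² + r''²) > 0 on J, and let κ₁ = x₁'x₂'' − x₁''x₂'. Then the invariant k = −κ₁²/r² of the rotational surface z(u,v) = (x₁(u), x₂(u), r(u)·cos v, r(u)·sin v) is a nonzero constant on J if and only if there exists a nonzero real constant a with r(u) = a·κ₁(u) for all u ∈ J; in that case k = −1/a². -/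
/-- For the rotational surface generated by a unit-speed curve `(x₁, x₂, r)` in `𝔼³`
with `r > 0` and curvature `κ > 0`, the invariant `k = -κ₁²/r²`
(with `κ₁ = x₁'x₂'' - x₁''x₂'`) is a nonzero constant on `J` if and only if
`r = a·κ₁` for some nonzero real constant `a`; in that case `k = -1/a²`. -/
theorem rotational_surface_constant_k
    (J : Set ℝ) (hJopen : IsOpen J) (hJconn : J.OrdConnected)
    (x₁ x₂ r : ℝ → ℝ)
    (hx₁ : ContDiffOn ℝ (⊤ : ℕ∞) x₁ J) (hx₂ : ContDiffOn ℝ (⊤ : ℕ∞) x₂ J) (hr : ContDiffOn ℝ (⊤ : ℕ∞) r J)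
    (hunit : ∀ u ∈ J, (deriv x₁ u) ^ 2 + (deriv x₂ u) ^ 2 + (deriv r u) ^ 2 = 1)
    (hrpos : ∀ u ∈ J, 0 < r u)
    (κ : ℝ → ℝ)
    (hκ : ∀ u, κ u = Real.sqrt ((deriv (deriv x₁) u) ^ 2 + (deriv (deriv x₂) u) ^ 2
      + (deriv (deriv r) u) ^ 2))
    (hκpos : ∀ u ∈ J, 0 < κ u)
    (κ₁ : ℝ → ℝ)
    (hκ₁ : ∀ u, κ₁ u = deriv x₁ u * deriv (deriv x₂) u - deriv (deriv x₁) u * deriv x₂ u)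
    (k : ℝ → ℝ)
    (hk : ∀ u, k u = -(κ₁ u) ^ 2 / (r u) ^ 2) :
    ((∃ c : ℝ, c ≠ 0 ∧ ∀ u ∈ J, k u = c) ↔
      (∃ a : ℝ, a ≠ 0 ∧ ∀ u ∈ J, r u = a * κ₁ u)) ∧
    (∀ a : ℝ, a ≠ 0 → (∀ u ∈ J, r u = a * κ₁ u) → ∀ u ∈ J, k u = -1 / a ^ 2) := by
  -- Second conjunct first, as a hypothesis to reuse
  have main : ∀ a : ℝ, a ≠ 0 → (∀ u ∈ J, r u = a * κ₁ u) → ∀ u ∈ J, k u = -1 / a ^ 2 := by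
    intro a ha hra u hu
    have hr0 := hrpos u hu
    have hκ₁ne : κ₁ u ≠ 0 := by
      intro h0
      rw [hra u hu, h0, mul_zero] at hr0
      exact lt_irrefl 0 hr0
    rw [hk, hra u hu]
    field_simp
  refine ⟨⟨?_, ?_⟩, main⟩
  · rintro ⟨c, hc, hck⟩
    rcases Set.eq_empty_or_nonempty J with hJ | ⟨u₀, hu₀⟩
    · exact ⟨1, one_ne_zero, fun u hu => by simp [hJ] at hu⟩
    -- squared relation
    have hsq : ∀ u ∈ J, (κ₁ u) ^ 2 = -c * (r u) ^ 2 := by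
      intro u hu
      have hr0 := hrpos u hu
      have h := hck u hu
      rw [hk] at h
      field_simp at h
      nlinarith [h]
    have hne : ∀ u ∈ J, κ₁ u ≠ 0 := by
      intro u hu h0
      have h := hsq u hu
      rw [h0] at h
      have hr0 := hrpos u hu
      have hr2 : r u ^ 2 ≠ 0 := pow_ne_zero 2 (ne_of_gt hr0)
      have hc0 : c * r u ^ 2 = 0 := by linarith [h]
      exact hc ((mul_eq_zero.1 hc0).resolve_right hr2)
    -- continuity of κ₁ on J
    have hcont : ContinuousOn κ₁ J := by
      have h1 : ContinuousOn (deriv x₁) J :=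
        (hx₁.deriv_of_isOpen (m := (⊤ : ℕ∞)) hJopen (by simp)).continuousOn
      have h2 : ContinuousOn (deriv x₂) J :=
        (hx₂.deriv_of_isOpen (m := (⊤ : ℕ∞)) hJopen (by simp)).continuousOn
      have h1' : ContinuousOn (deriv (deriv x₁)) J :=
        ((hx₁.deriv_of_isOpen (m := (⊤ : ℕ∞)) hJopen (by simp)).deriv_of_isOpen (m := (⊤ : ℕ∞)) hJopen (by simp)).continuousOn
      have h2' : ContinuousOn (deriv (deriv x₂)) J :=
        ((hx₂.deriv_of_isOpen (m := (⊤ : ℕ∞)) hJopen (by simp)).deriv_of_isOpen (m := (⊤ : ℕ∞)) hJopen (by simp)).continuousOn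
      have : κ₁ = fun u => deriv x₁ u * deriv (deriv x₂) u - deriv (deriv x₁) u * deriv x₂ u :=
        funext hκ₁
      rw [this]
      exact (h1.mul h2').sub (h1'.mul h2)
    -- κ₁ has constant sign on J
    have hsign : ∀ u ∈ J, 0 < κ₁ u * κ₁ u₀ := by
      intro u hu
      by_contra hle
      push_neg at hle
      have h1 := hne u hu
      have h2 := hne u₀ hu₀
      have hlt : κ₁ u * κ₁ u₀ < 0 := lt_of_le_of_ne hle (mul_ne_zero h1 h2)
      have hmem : (0 : ℝ) ∈ Set.uIcc (κ₁ u) (κ₁ u₀) := by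
        rcases mul_neg_iff.1 hlt with ⟨hp, hn⟩ | ⟨hn, hp⟩
        · exact Set.mem_uIcc.2 (Or.inr ⟨le_of_lt hn, le_of_lt hp⟩)
        · exact Set.mem_uIcc.2 (Or.inl ⟨le_of_lt hn, le_of_lt hp⟩)
      have hsub : Set.uIcc u u₀ ⊆ J := hJconn.uIcc_subset hu hu₀
      obtain ⟨w, hw, hw0⟩ := intermediate_value_uIcc (hcont.mono hsub) hmem
      exact hne w (hsub hw) hw0
    refine ⟨r u₀ / κ₁ u₀, ?_, ?_⟩
    · exact div_ne_zero (ne_of_gt (hrpos u₀ hu₀)) (hne u₀ hu₀)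
    · intro u hu
      have hr0 := hrpos u hu
      have hr0' := hrpos u₀ hu₀
      have hs1 := hsq u hu
      have hs2 := hsq u₀ hu₀
      have hsgn := hsign u hu
      have hx2y2 : (κ₁ u * r u₀) ^ 2 = (κ₁ u₀ * r u) ^ 2 := by nlinarith
      have hxy : 0 < (κ₁ u * r u₀) * (κ₁ u₀ * r u) := by nlinarith [mul_pos hsgn (mul_pos hr0' hr0)]
      have hsumpos : 0 < (κ₁ u * r u₀ + κ₁ u₀ * r u) ^ 2 := by nlinarith
      have hprod : (κ₁ u * r u₀ - κ₁ u₀ * r u) * (κ₁ u * r u₀ + κ₁ u₀ * r u) = 0 := by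
        nlinarith
      have hsumne : κ₁ u * r u₀ + κ₁ u₀ * r u ≠ 0 := by
        intro h
        rw [h] at hsumpos
        simp at hsumpos
      have hdiff : κ₁ u * r u₀ - κ₁ u₀ * r u = 0 :=
        (mul_eq_zero.1 hprod).resolve_right hsumne
      have hκ₁ne := hne u₀ hu₀
      field_simp
      linarith
  · rintro ⟨a, ha, hra⟩
    rcases Set.eq_empty_or_nonempty J with hJ | ⟨u₀, hu₀⟩
    · exact ⟨1, one_ne_zero, fun u hu => by simp [hJ] at hu⟩
    refine ⟨-1 / a ^ 2, ?_, fun u hu => main a ha hra u hu⟩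
    intro h
    have : a ^ 2 ≠ 0 := pow_ne_zero 2 ha
    field_simp at h
    norm_num at h
end
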